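/- arXiv:2411.00951 — 4 statements merged into one kernel-verified Lean document; each statement's English description precedes it below -/
import Mathlib

section
/- Let W be a boxworld process over finite nonempty wire index sets and let d := min(d_{O'_A}, d_{O'_B}). Then for all sets of probabilistic local operations T^{A|X} on Alice's wires and T^{B|Y} on Bob's wires with classical sets A = B = X = Y = {0,1}, the generated correlations P̄ = (T^{A|X} ⊗ T^{B|Y}) * W satisfy (1/4)·Σ_{a,b,x,y} δ_{a,y}·δ_{b,x}·P̄(a, b | x, y) ≤ 1 − 1/(2d). -/
open Finset
open scoped Classical

noncomputable section

namespace Boxworld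

/-- A bipartite 8-wire tensor `W(i'_A, o_A, i'_B, o_B | i_A, o'_A, i_B, o'_B)`,
with output indices `IA' OA IB' OB` and input indices `IA OA' IB OB'`. -/
abbrev WTen (IA' OA IB' OB IA OA' IB OB' : Type) : Type :=
  IA' → OA → IB' → OB → IA → OA' → IB → OB' → ℝ

/-- A local-operation tensor `T(i, o' | i', o)`, argument order `(i', o, i, o')`. -/
abbrev OpTen (I' O I O' : Type) : Type := I' → O → I → O' → ℝ

section WireDefs

variable {IA' OA IB' OB IA OA' IB OB' : Type}
variable [Fintype IA'] [Fintype OA] [Fintype IB'] [Fintype OB]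
variable [Fintype IA] [Fintype OA'] [Fintype IB] [Fintype OB']

/-- Reduce-and-replace over the index `IA'`. -/
def rrIA' (W : WTen IA' OA IB' OB IA OA' IB OB') : WTen IA' OA IB' OB IA OA' IB OB' :=
  fun _ oa ib' ob ia oa' ib ob' => (∑ j, W j oa ib' ob ia oa' ib ob') / (Fintype.card IA' : ℝ)

/-- Reduce-and-replace over the index `OA`. -/
def rrOA (W : WTen IA' OA IB' OB IA OA' IB OB') : WTen IA' OA IB' OB IA OA' IB OB' :=
  fun ia' _ ib' ob ia oa' ib ob' => (∑ j, W ia' j ib' ob ia oa' ib ob') / (Fintype.card OA : ℝ)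

/-- Reduce-and-replace over the index `IB'`. -/
def rrIB' (W : WTen IA' OA IB' OB IA OA' IB OB') : WTen IA' OA IB' OB IA OA' IB OB' :=
  fun ia' oa _ ob ia oa' ib ob' => (∑ j, W ia' oa j ob ia oa' ib ob') / (Fintype.card IB' : ℝ)

/-- Reduce-and-replace over the index `OB`. -/
def rrOB (W : WTen IA' OA IB' OB IA OA' IB OB') : WTen IA' OA IB' OB IA OA' IB OB' :=
  fun ia' oa ib' _ ia oa' ib ob' => (∑ j, W ia' oa ib' j ia oa' ib ob') / (Fintype.card OB : ℝ)

/-- Reduce-and-replace over the index `IA`. -/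
def rrIA (W : WTen IA' OA IB' OB IA OA' IB OB') : WTen IA' OA IB' OB IA OA' IB OB' :=
  fun ia' oa ib' ob _ oa' ib ob' => (∑ j, W ia' oa ib' ob j oa' ib ob') / (Fintype.card IA : ℝ)

/-- Reduce-and-replace over the index `OA'`. -/
def rrOA' (W : WTen IA' OA IB' OB IA OA' IB OB') : WTen IA' OA IB' OB IA OA' IB OB' :=
  fun ia' oa ib' ob ia _ ib ob' => (∑ j, W ia' oa ib' ob ia j ib ob') / (Fintype.card OA' : ℝ)

/-- Reduce-and-replace over the index `IB`. -/
def rrIB (W : WTen IA' OA IB' OB IA OA' IB OB') : WTen IA' OA IB' OB IA OA' IB OB' :=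
  fun ia' oa ib' ob ia oa' _ ob' => (∑ j, W ia' oa ib' ob ia oa' j ob') / (Fintype.card IB : ℝ)

/-- Reduce-and-replace over the index `OB'`. -/
def rrOB' (W : WTen IA' OA IB' OB IA OA' IB OB') : WTen IA' OA IB' OB IA OA' IB OB' :=
  fun ia' oa ib' ob ia oa' ib _ => (∑ j, W ia' oa ib' ob ia oa' ib j) / (Fintype.card OB' : ℝ)

/-- Total reduction `r(W)`: the sum of all entries of `W`. -/
def tot (W : WTen IA' OA IB' OB IA OA' IB OB') : ℝ :=
  ∑ ia', ∑ oa, ∑ ib', ∑ ob, ∑ ia, ∑ oa', ∑ ib, ∑ ob', W ia' oa ib' ob ia oa' ib ob'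

/-- Elementwise nonnegativity `W ≥ 0`. -/
def Nonneg8 (W : WTen IA' OA IB' OB IA OA' IB OB') : Prop :=
  ∀ ia' oa ib' ob ia oa' ib ob', 0 ≤ W ia' oa ib' ob ia oa' ib ob'

/-- Reduce-and-replace over all of Alice's indices `𝔸 = I'_A I_A O_A O'_A`. -/
def rrA (W : WTen IA' OA IB' OB IA OA' IB OB') : WTen IA' OA IB' OB IA OA' IB OB' :=
  rrIA' (rrIA (rrOA (rrOA' W)))

/-- Reduce-and-replace over all of Bob's indices `𝔹 = I'_B I_B O_B O'_B`. -/
def rrB (W : WTen IA' OA IB' OB IA OA' IB OB') : WTen IA' OA IB' OB IA OA' IB OB' :=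
  rrIB' (rrIB (rrOB (rrOB' W)))

/-- The combination `_{(1 − O'_A + O_A O'_A − I_A O_A O'_A)}W`. -/
def LA (W : WTen IA' OA IB' OB IA OA' IB OB') : WTen IA' OA IB' OB IA OA' IB OB' :=
  W - rrOA' W + rrOA (rrOA' W) - rrIA (rrOA (rrOA' W))

/-- The combination `_{(1 − O'_B + O_B O'_B − I_B O_B O'_B)}W`. -/
def LB (W : WTen IA' OA IB' OB IA OA' IB OB') : WTen IA' OA IB' OB IA OA' IB OB' :=
  W - rrOB' W + rrOB (rrOB' W) - rrIB (rrOB (rrOB' W))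

/-- A bipartite process tensor. -/
def IsProcessTensor (W : WTen IA' OA IB' OB IA OA' IB OB') : Prop :=
  Nonneg8 W ∧
  tot W = (Fintype.card IA : ℝ) * (Fintype.card OA' : ℝ) *
      (Fintype.card IB : ℝ) * (Fintype.card OB' : ℝ) ∧
  rrA (LB W) = 0 ∧
  rrB (LA W) = 0 ∧
  LA (LB W) = 0

/-- Reduce-and-replace over all primed indices `O'_A O'_B I'_A I'_B`. -/
def rrPrimes (W : WTen IA' OA IB' OB IA OA' IB OB') : WTen IA' OA IB' OB IA OA' IB OB' :=
  rrOA' (rrOB' (rrIA' (rrIB' W)))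

/-- The combination `_{(1 − O'_A + O'_A I'_A − O'_B O'_A I'_A)}W`. -/
def MA (W : WTen IA' OA IB' OB IA OA' IB OB') : WTen IA' OA IB' OB IA OA' IB OB' :=
  W - rrOA' W + rrIA' (rrOA' W) - rrOB' (rrIA' (rrOA' W))

/-- The combination `_{(1 − O'_B + O'_B I'_B − O'_A O'_B I'_B)}W`. -/
def MB (W : WTen IA' OA IB' OB IA OA' IB OB') : WTen IA' OA IB' OB IA OA' IB OB' :=
  W - rrOB' W + rrIB' (rrOB' W) - rrOA' (rrIB' (rrOB' W))

/-- The four nonsignaling-preservation (NSP) conditions. -/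
def SatisfiesNSP (W : WTen IA' OA IB' OB IA OA' IB OB') : Prop :=
  rrOA (rrPrimes W) = rrIA (rrOA (rrPrimes W)) ∧
  rrOB (rrPrimes W) = rrIB (rrOB (rrPrimes W)) ∧
  rrOA (MA W) = rrIA (rrOA (MA W)) ∧
  rrOB (MB W) = rrIB (rrOB (MB W))

/-- A boxworld process. -/
def IsBoxworldProcess (W : WTen IA' OA IB' OB IA OA' IB OB') : Prop :=
  Nonneg8 W ∧
  tot W = (Fintype.card IA : ℝ) * (Fintype.card OA' : ℝ) *
      (Fintype.card IB : ℝ) * (Fintype.card OB' : ℝ) ∧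
  rrA W = rrOB' (rrA W) ∧
  rrB W = rrOA' (rrB W) ∧
  W = rrOA' W + rrOB' W - rrOA' (rrOB' W) ∧
  rrOA W = rrIA (rrOA W) ∧
  rrOB W = rrIB (rrOB W)

/-- The action `W * P` of a process tensor on a bipartite box
`P(o'_A, o'_B | i'_A, i'_B)`, contracting the indices `O'_A, O'_B, I'_A, I'_B`. -/
def actOnBox (W : WTen IA' OA IB' OB IA OA' IB OB')
    (P : OA' → OB' → IA' → IB' → ℝ) : OA → OB → IA → IB → ℝ :=
  fun oa ob ia ib =>
    ∑ ia', ∑ ib', ∑ oa', ∑ ob', W ia' oa ib' ob ia oa' ib ob' * P oa' ob' ia' ib'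

end WireDefs

section OpDefs

variable {I' O I O' : Type}
variable [Fintype I'] [Fintype O] [Fintype I] [Fintype O']

/-- Reduce-and-replace over the index `I'` of an operation tensor. -/
def rrOpI' (T : OpTen I' O I O') : OpTen I' O I O' :=
  fun _ o i o' => (∑ j, T j o i o') / (Fintype.card I' : ℝ)

/-- Reduce-and-replace over the index `O` of an operation tensor. -/
def rrOpO (T : OpTen I' O I O') : OpTen I' O I O' :=
  fun i' _ i o' => (∑ j, T i' j i o') / (Fintype.card O : ℝ)

/-- Reduce-and-replace over the index `I` of an operation tensor. -/
def rrOpI (T : OpTen I' O I O') : OpTen I' O I O' :=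
  fun i' o _ o' => (∑ j, T i' o j o') / (Fintype.card I : ℝ)

/-- Reduce-and-replace over the index `O'` of an operation tensor. -/
def rrOpO' (T : OpTen I' O I O') : OpTen I' O I O' :=
  fun i' o i _ => (∑ j, T i' o i j) / (Fintype.card O' : ℝ)

/-- Total reduction of an operation tensor. -/
def totOp (T : OpTen I' O I O') : ℝ := ∑ i', ∑ o, ∑ i, ∑ o', T i' o i o'

/-- A deterministic local operation. -/
def IsDetOp (T : OpTen I' O I O') : Prop :=
  totOp T = (Fintype.card I' : ℝ) * (Fintype.card O : ℝ) ∧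
  rrOpI (rrOpO' T) = rrOpI' (rrOpI (rrOpO (rrOpO' T))) ∧
  rrOpO' T = rrOpO (rrOpO' T)

/-- A set of probabilistic local operations `T^{a|x}(i, o' | i', o)`:
nonnegative tensors whose sum over the classical outcome `a` is, for each
classical input `x`, a deterministic local operation. -/
def IsLocalOps {A X : Type} [Fintype A] (T : A → X → OpTen I' O I O') : Prop :=
  (∀ a x i' o i o', 0 ≤ T a x i' o i o') ∧
  ∀ x, IsDetOp (fun i' o i o' => ∑ a, T a x i' o i o')

/-- A nonsignaling set of probabilistic local operations: either the
deterministic operation `T^x` is independent of `x` (case 1), or it is a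
convex combination of deterministic pre-processings `f_λ` (possibly depending
on `x`) and post-processings `g_λ` independent of both the box output and `x`
(case 2). -/
def IsNSLocalOps {A X : Type} [Fintype A] (T : A → X → OpTen I' O I O') : Prop :=
  IsLocalOps T ∧
  ((∀ x x' i' o i o', (∑ a, T a x i' o i o') = ∑ a, T a x' i' o i o') ∨
    ∃ (m : ℕ) (π : Fin m → ℝ) (f : Fin m → I' → X → I) (g : Fin m → I' → O'),
      (∀ l, 0 ≤ π l) ∧ (∑ l, π l = 1) ∧
      ∀ x i' o i o', (∑ a, T a x i' o i o') =
        ∑ l, π l * ((if i = f l i' x then (1 : ℝ) else 0) *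
          (if o' = g l i' then (1 : ℝ) else 0)))

end OpDefs

/-- A bipartite nonsignaling box `P(o_1, o_2 | i_1, i_2)`. -/
def IsNSBox {O1 O2 I1 I2 : Type} [Fintype O1] [Fintype O2]
    (P : O1 → O2 → I1 → I2 → ℝ) : Prop :=
  (∀ o1 o2 i1 i2, 0 ≤ P o1 o2 i1 i2) ∧
  (∀ i1 i2, ∑ o1, ∑ o2, P o1 o2 i1 i2 = 1) ∧
  (∀ o1 i1 i2 i2', ∑ o2, P o1 o2 i1 i2 = ∑ o2, P o1 o2 i1 i2') ∧
  (∀ o2 i1 i1' i2, ∑ o1, P o1 o2 i1 i2 = ∑ o1, P o1 o2 i1' i2)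

section Corr

variable {IA' OA IB' OB IA OA' IB OB' : Type}
variable [Fintype IA'] [Fintype OA] [Fintype IB'] [Fintype OB]
variable [Fintype IA] [Fintype OA'] [Fintype IB] [Fintype OB']
variable {A X B Y : Type}

/-- The correlations `(T^{A|X} ⊗ T^{B|Y}) * W` generated by local operations
acting on a process tensor: contraction over all eight wire indices. -/
def corr (TA : A → X → OpTen IA' OA IA OA') (TB : B → Y → OpTen IB' OB IB OB')
    (W : WTen IA' OA IB' OB IA OA' IB OB') (a : A) (b : B) (x : X) (y : Y) : ℝ :=
  ∑ ia', ∑ oa, ∑ ib', ∑ ob, ∑ ia, ∑ oa', ∑ ib, ∑ ob',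
    TA a x ia' oa ia oa' * TB b y ib' ob ib ob' * W ia' oa ib' ob ia oa' ib ob'

end Corr

/- ===== auxiliary machinery ===== -/

section AuxGeneric

lemma comm4 {α β γ δ : Type} [Fintype α] [Fintype β] [Fintype γ] [Fintype δ]
    (f : α → β → γ → δ → ℝ) :
    ∑ a, ∑ b, ∑ c, ∑ d, f a b c d = ∑ c, ∑ d, ∑ a, ∑ b, f a b c d := by
  calc ∑ a, ∑ b, ∑ c, ∑ d, f a b c d
      = ∑ a, ∑ c, ∑ b, ∑ d, f a b c d :=
        Finset.sum_congr rfl fun a _ => Finset.sum_comm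
    _ = ∑ c, ∑ a, ∑ b, ∑ d, f a b c d := Finset.sum_comm
    _ = ∑ c, ∑ a, ∑ d, ∑ b, f a b c d :=
        Finset.sum_congr rfl fun c _ => Finset.sum_congr rfl fun a _ => Finset.sum_comm
    _ = ∑ c, ∑ d, ∑ a, ∑ b, f a b c d :=
        Finset.sum_congr rfl fun c _ => Finset.sum_comm

lemma swap1_4 {ε α β γ δ : Type} [Fintype ε] [Fintype α] [Fintype β] [Fintype γ] [Fintype δ]
    (f : ε → α → β → γ → δ → ℝ) :
    ∑ e, ∑ a, ∑ b, ∑ c, ∑ d, f e a b c d = ∑ a, ∑ b, ∑ c, ∑ d, ∑ e, f e a b c d := by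
  calc ∑ e, ∑ a, ∑ b, ∑ c, ∑ d, f e a b c d
      = ∑ a, ∑ e, ∑ b, ∑ c, ∑ d, f e a b c d := Finset.sum_comm
    _ = ∑ a, ∑ b, ∑ e, ∑ c, ∑ d, f e a b c d :=
        Finset.sum_congr rfl fun a _ => Finset.sum_comm
    _ = ∑ a, ∑ b, ∑ c, ∑ e, ∑ d, f e a b c d :=
        Finset.sum_congr rfl fun a _ => Finset.sum_congr rfl fun b _ => Finset.sum_comm
    _ = ∑ a, ∑ b, ∑ c, ∑ d, ∑ e, f e a b c d :=
        Finset.sum_congr rfl fun a _ => Finset.sum_congr rfl fun b _ =>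
          Finset.sum_congr rfl fun c _ => Finset.sum_comm

lemma swap44 {a1 a2 a3 a4 b1 b2 b3 b4 : Type}
    [Fintype a1] [Fintype a2] [Fintype a3] [Fintype a4]
    [Fintype b1] [Fintype b2] [Fintype b3] [Fintype b4]
    (f : a1 → a2 → a3 → a4 → b1 → b2 → b3 → b4 → ℝ) :
    ∑ x1, ∑ x2, ∑ x3, ∑ x4, ∑ y1, ∑ y2, ∑ y3, ∑ y4, f x1 x2 x3 x4 y1 y2 y3 y4
      = ∑ y1, ∑ y2, ∑ y3, ∑ y4, ∑ x1, ∑ x2, ∑ x3, ∑ x4, f x1 x2 x3 x4 y1 y2 y3 y4 := by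
  calc ∑ x1, ∑ x2, ∑ x3, ∑ x4, ∑ y1, ∑ y2, ∑ y3, ∑ y4, f x1 x2 x3 x4 y1 y2 y3 y4
      = ∑ x1, ∑ x2, ∑ x3, ∑ y1, ∑ y2, ∑ y3, ∑ y4, ∑ x4, f x1 x2 x3 x4 y1 y2 y3 y4 :=
        Finset.sum_congr rfl fun _ _ => Finset.sum_congr rfl fun _ _ =>
          Finset.sum_congr rfl fun _ _ => swap1_4 _
    _ = ∑ x1, ∑ x2, ∑ y1, ∑ y2, ∑ y3, ∑ y4, ∑ x3, ∑ x4, f x1 x2 x3 x4 y1 y2 y3 y4 :=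
        Finset.sum_congr rfl fun _ _ => Finset.sum_congr rfl fun _ _ => swap1_4 _
    _ = ∑ x1, ∑ y1, ∑ y2, ∑ y3, ∑ y4, ∑ x2, ∑ x3, ∑ x4, f x1 x2 x3 x4 y1 y2 y3 y4 :=
        Finset.sum_congr rfl fun _ _ => swap1_4 _
    _ = ∑ y1, ∑ y2, ∑ y3, ∑ y4, ∑ x1, ∑ x2, ∑ x3, ∑ x4, f x1 x2 x3 x4 y1 y2 y3 y4 :=
        swap1_4 _

lemma reduce_core {I' O I O' : Type} [Fintype I'] [Fintype O] [Fintype I] [Fintype O']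
    [Nonempty O] [Nonempty I] [Nonempty O']
    (S V : I' → O → I → O' → ℝ)
    (h1 : ∀ i' o o₂ i, ∑ o', S i' o i o' = ∑ o', S i' o₂ i o')
    (h2 : ∀ i' o, ∑ i, ∑ o', S i' o i o' = 1)
    (hV1 : ∀ i' o i o' o'₂, V i' o i o' = V i' o i o'₂)
    (hV2 : ∀ i' i i₂ o', ∑ o, V i' o i o' = ∑ o, V i' o i₂ o') :
    ∑ i', ∑ o, ∑ i, ∑ o', S i' o i o' * V i' o i o'
      = (1 / ((Fintype.card O' : ℝ) * (Fintype.card I : ℝ))) *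
        ∑ i', ∑ o, ∑ i, ∑ o', V i' o i o' := by
  obtain ⟨o₀⟩ := (inferInstance : Nonempty O)
  obtain ⟨i₀⟩ := (inferInstance : Nonempty I)
  obtain ⟨o'₀⟩ := (inferInstance : Nonempty O')
  have cO' : (0:ℝ) < (Fintype.card O' : ℝ) := by exact_mod_cast Fintype.card_pos
  have cI : (0:ℝ) < (Fintype.card I : ℝ) := by exact_mod_cast Fintype.card_pos
  have hL : ∑ i', ∑ o, ∑ i, ∑ o', S i' o i o' * V i' o i o'
      = ∑ i', ∑ o, V i' o i₀ o'₀ := by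
    calc ∑ i', ∑ o, ∑ i, ∑ o', S i' o i o' * V i' o i o'
        = ∑ i', ∑ o, ∑ i, (∑ o', S i' o₀ i o') * V i' o i o'₀ := by
          refine Finset.sum_congr rfl fun i' _ => Finset.sum_congr rfl fun o _ =>
            Finset.sum_congr rfl fun i _ => ?_
          calc ∑ o', S i' o i o' * V i' o i o'
              = ∑ o', S i' o i o' * V i' o i o'₀ :=
                Finset.sum_congr rfl fun o' _ => by rw [hV1 i' o i o' o'₀]
            _ = (∑ o', S i' o i o') * V i' o i o'₀ := (Finset.sum_mul _ _ _).symm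
            _ = (∑ o', S i' o₀ i o') * V i' o i o'₀ := by rw [h1 i' o o₀ i]
      _ = ∑ i', ∑ i, (∑ o', S i' o₀ i o') * ∑ o, V i' o i o'₀ := by
          refine Finset.sum_congr rfl fun i' _ => ?_
          rw [Finset.sum_comm]
          exact Finset.sum_congr rfl fun i _ => (Finset.mul_sum _ _ _).symm
      _ = ∑ i', (∑ i, ∑ o', S i' o₀ i o') * ∑ o, V i' o i₀ o'₀ := by
          refine Finset.sum_congr rfl fun i' _ => ?_
          rw [Finset.sum_mul]
          exact Finset.sum_congr rfl fun i _ => by rw [hV2 i' i i₀ o'₀]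
      _ = ∑ i', ∑ o, V i' o i₀ o'₀ :=
          Finset.sum_congr rfl fun i' _ => by rw [h2 i' o₀, one_mul]
  have inner : ∀ i', ∑ o, ∑ i, ∑ o', V i' o i o'
      = (Fintype.card O' : ℝ) * ((Fintype.card I : ℝ) * ∑ o, V i' o i₀ o'₀) := by
    intro i'
    calc ∑ o, ∑ i, ∑ o', V i' o i o'
        = ∑ o, ∑ i, (Fintype.card O' : ℝ) * V i' o i o'₀ := by
          refine Finset.sum_congr rfl fun o _ => Finset.sum_congr rfl fun i _ => ?_
          rw [Finset.sum_congr rfl fun o' _ => hV1 i' o i o' o'₀]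
          simp [Finset.sum_const, Finset.card_univ, nsmul_eq_mul]
      _ = (Fintype.card O' : ℝ) * ∑ o, ∑ i, V i' o i o'₀ := by
          simp only [← Finset.mul_sum]
      _ = (Fintype.card O' : ℝ) * ∑ i, ∑ o, V i' o i o'₀ := by rw [Finset.sum_comm]
      _ = (Fintype.card O' : ℝ) * ∑ i, ∑ o, V i' o i₀ o'₀ := by
          rw [Finset.sum_congr rfl fun i (_ : i ∈ Finset.univ) => hV2 i' i i₀ o'₀]
      _ = (Fintype.card O' : ℝ) * ((Fintype.card I : ℝ) * ∑ o, V i' o i₀ o'₀) := by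
          rw [Finset.sum_const, Finset.card_univ, nsmul_eq_mul]
  rw [hL, Finset.sum_congr rfl fun i' (_ : i' ∈ Finset.univ) => inner i', ← Finset.mul_sum,
    ← Finset.mul_sum]
  field_simp

end AuxGeneric

section AuxWire

variable {IA' OA IB' OB IA OA' IB OB' : Type}
variable [Fintype IA'] [Fintype OA] [Fintype IB'] [Fintype OB]
variable [Fintype IA] [Fintype OA'] [Fintype IB] [Fintype OB']
variable {A X B Y : Type}

lemma corr_flatB (TA : A → X → OpTen IA' OA IA OA') (TB : B → Y → OpTen IB' OB IB OB')
    (V : WTen IA' OA IB' OB IA OA' IB OB') (a : A) (b : B) (x : X) (y : Y) :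
    corr TA TB V a b x y = ∑ ia', ∑ oa, ∑ ia, ∑ oa', TA a x ia' oa ia oa' *
      ∑ ib', ∑ ob, ∑ ib, ∑ ob', TB b y ib' ob ib ob' * V ia' oa ib' ob ia oa' ib ob' := by
  calc corr TA TB V a b x y
      = ∑ ia', ∑ oa, ∑ ib', ∑ ob, ∑ ia, ∑ oa', ∑ ib, ∑ ob',
          TA a x ia' oa ia oa' * TB b y ib' ob ib ob' * V ia' oa ib' ob ia oa' ib ob' := rfl
    _ = ∑ ia', ∑ oa, ∑ ia, ∑ oa', ∑ ib', ∑ ob, ∑ ib, ∑ ob',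
          TA a x ia' oa ia oa' * TB b y ib' ob ib ob' * V ia' oa ib' ob ia oa' ib ob' :=
        Finset.sum_congr rfl fun ia' _ => Finset.sum_congr rfl fun oa _ =>
          comm4 fun ib' ob ia oa' => ∑ ib, ∑ ob',
            TA a x ia' oa ia oa' * TB b y ib' ob ib ob' * V ia' oa ib' ob ia oa' ib ob'
    _ = ∑ ia', ∑ oa, ∑ ia, ∑ oa', TA a x ia' oa ia oa' *
          ∑ ib', ∑ ob, ∑ ib, ∑ ob', TB b y ib' ob ib ob' * V ia' oa ib' ob ia oa' ib ob' := by
        refine Finset.sum_congr rfl fun ia' _ => Finset.sum_congr rfl fun oa _ =>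
          Finset.sum_congr rfl fun ia _ => Finset.sum_congr rfl fun oa' _ => ?_
        simp only [Finset.mul_sum, mul_assoc]

lemma corr_flatA (TA : A → X → OpTen IA' OA IA OA') (TB : B → Y → OpTen IB' OB IB OB')
    (V : WTen IA' OA IB' OB IA OA' IB OB') (a : A) (b : B) (x : X) (y : Y) :
    corr TA TB V a b x y = ∑ ib', ∑ ob, ∑ ib, ∑ ob', TB b y ib' ob ib ob' *
      ∑ ia', ∑ oa, ∑ ia, ∑ oa', TA a x ia' oa ia oa' * V ia' oa ib' ob ia oa' ib ob' := by
  calc corr TA TB V a b x y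
      = ∑ ia', ∑ oa, ∑ ib', ∑ ob, ∑ ia, ∑ oa', ∑ ib, ∑ ob',
          TA a x ia' oa ia oa' * TB b y ib' ob ib ob' * V ia' oa ib' ob ia oa' ib ob' := rfl
    _ = ∑ ib', ∑ ob, ∑ ia', ∑ oa, ∑ ia, ∑ oa', ∑ ib, ∑ ob',
          TA a x ia' oa ia oa' * TB b y ib' ob ib ob' * V ia' oa ib' ob ia oa' ib ob' :=
        comm4 fun ia' oa ib' ob => ∑ ia, ∑ oa', ∑ ib, ∑ ob',
          TA a x ia' oa ia oa' * TB b y ib' ob ib ob' * V ia' oa ib' ob ia oa' ib ob'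
    _ = ∑ ib', ∑ ob, ∑ ia', ∑ oa, ∑ ib, ∑ ob', ∑ ia, ∑ oa',
          TA a x ia' oa ia oa' * TB b y ib' ob ib ob' * V ia' oa ib' ob ia oa' ib ob' :=
        Finset.sum_congr rfl fun ib' _ => Finset.sum_congr rfl fun ob _ =>
          Finset.sum_congr rfl fun ia' _ => Finset.sum_congr rfl fun oa _ =>
            comm4 fun ia oa' ib ob' =>
              TA a x ia' oa ia oa' * TB b y ib' ob ib ob' * V ia' oa ib' ob ia oa' ib ob'
    _ = ∑ ib', ∑ ob, ∑ ib, ∑ ob', ∑ ia', ∑ oa, ∑ ia, ∑ oa',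
          TA a x ia' oa ia oa' * TB b y ib' ob ib ob' * V ia' oa ib' ob ia oa' ib ob' :=
        Finset.sum_congr rfl fun ib' _ => Finset.sum_congr rfl fun ob _ =>
          comm4 fun ia' oa ib ob' => ∑ ia, ∑ oa',
            TA a x ia' oa ia oa' * TB b y ib' ob ib ob' * V ia' oa ib' ob ia oa' ib ob'
    _ = ∑ ib', ∑ ob, ∑ ib, ∑ ob', TB b y ib' ob ib ob' *
          ∑ ia', ∑ oa, ∑ ia, ∑ oa', TA a x ia' oa ia oa' * V ia' oa ib' ob ia oa' ib ob' := by
        refine Finset.sum_congr rfl fun ib' _ => Finset.sum_congr rfl fun ob _ =>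
          Finset.sum_congr rfl fun ib _ => Finset.sum_congr rfl fun ob' _ => ?_
        simp only [Finset.mul_sum]
        refine Finset.sum_congr rfl fun ia' _ => Finset.sum_congr rfl fun oa _ =>
          Finset.sum_congr rfl fun ia _ => Finset.sum_congr rfl fun oa' _ => by ring

lemma tot_reorder (W : WTen IA' OA IB' OB IA OA' IB OB') :
    tot W = ∑ ia', ∑ oa, ∑ ia, ∑ oa', ∑ ib', ∑ ob, ∑ ib, ∑ ob',
      W ia' oa ib' ob ia oa' ib ob' :=
  Finset.sum_congr rfl fun ia' _ => Finset.sum_congr rfl fun oa _ =>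
    comm4 fun ib' ob ia oa' => ∑ ib, ∑ ob', W ia' oa ib' ob ia oa' ib ob'

end AuxWire

set_option linter.unusedSectionVars false

section AuxCore

variable {IA' OA IB' OB IA OA' IB OB' : Type}
variable [Fintype IA'] [Fintype OA] [Fintype IB'] [Fintype OB]
variable [Fintype IA] [Fintype OA'] [Fintype IB] [Fintype OB']
variable [Nonempty IA'] [Nonempty OA] [Nonempty IB'] [Nonempty OB]
variable [Nonempty IA] [Nonempty OA'] [Nonempty IB] [Nonempty OB']

lemma coreA (W : WTen IA' OA IB' OB IA OA' IB OB')
    (SA : OpTen IA' OA IA OA') (F : OpTen IB' OB IB OB')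
    (hSA1 : ∀ i' o o₂ i, ∑ o', SA i' o i o' = ∑ o', SA i' o₂ i o')
    (hSA2 : ∀ i' o, ∑ i, ∑ o', SA i' o i o' = 1)
    (hC4A : ∀ ia' ib' ob ia ia₂ oa' ib ob',
      ∑ oa, W ia' oa ib' ob ia oa' ib ob' = ∑ oa, W ia' oa ib' ob ia₂ oa' ib ob') :
    ∑ ia', ∑ oa, ∑ ia, ∑ oa', SA ia' oa ia oa' *
        (∑ ib', ∑ ob, ∑ ib, ∑ ob', F ib' ob ib ob' * rrOA' W ia' oa ib' ob ia oa' ib ob')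
      = (1 / ((Fintype.card OA' : ℝ) * (Fintype.card IA : ℝ))) *
        ∑ ia', ∑ oa, ∑ ia, ∑ oa', ∑ ib', ∑ ob, ∑ ib, ∑ ob',
          F ib' ob ib ob' * W ia' oa ib' ob ia oa' ib ob' := by
  have hcA' : ((Fintype.card OA' : ℝ)) ≠ 0 := by exact_mod_cast Fintype.card_ne_zero
  have hrr : ∀ ia' ib' ob ia ia₂ oa' ib ob',
      ∑ oa, rrOA' W ia' oa ib' ob ia oa' ib ob'
        = ∑ oa, rrOA' W ia' oa ib' ob ia₂ oa' ib ob' := by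
    intro ia' ib' ob ia ia₂ oa' ib ob'
    simp only [rrOA', ← Finset.sum_div]
    congr 1
    rw [Finset.sum_comm]
    conv_rhs => rw [Finset.sum_comm]
    exact Finset.sum_congr rfl fun j _ => hC4A ia' ib' ob ia ia₂ j ib ob'
  have hVswap : ∀ (iaa : IA) (ia' : IA') (oa' : OA'),
      (∑ oa, ∑ ib', ∑ ob, ∑ ib, ∑ ob', F ib' ob ib ob' *
          rrOA' W ia' oa ib' ob iaa oa' ib ob')
        = ∑ ib', ∑ ob, ∑ ib, ∑ ob', F ib' ob ib ob' *
            ∑ oa, rrOA' W ia' oa ib' ob iaa oa' ib ob' := by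
    intro iaa ia' oa'
    rw [swap1_4 (fun oa ib' ob ib ob' =>
      F ib' ob ib ob' * rrOA' W ia' oa ib' ob iaa oa' ib ob')]
    exact Finset.sum_congr rfl fun _ _ => Finset.sum_congr rfl fun _ _ =>
      Finset.sum_congr rfl fun _ _ => Finset.sum_congr rfl fun _ _ =>
        (Finset.mul_sum _ _ _).symm
  have hV1 : ∀ (i' : IA') (o : OA) (i : IA) (o' o'₂ : OA'),
      (∑ ib', ∑ ob, ∑ ib, ∑ ob', F ib' ob ib ob' * rrOA' W i' o ib' ob i o' ib ob')
        = ∑ ib', ∑ ob, ∑ ib, ∑ ob', F ib' ob ib ob' * rrOA' W i' o ib' ob i o'₂ ib ob' :=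
    fun _ _ _ _ _ => rfl
  have hV2 : ∀ (i' : IA') (i i₂ : IA) (o' : OA'),
      (∑ o, ∑ ib', ∑ ob, ∑ ib, ∑ ob', F ib' ob ib ob' * rrOA' W i' o ib' ob i o' ib ob')
        = ∑ o, ∑ ib', ∑ ob, ∑ ib, ∑ ob', F ib' ob ib ob' *
            rrOA' W i' o ib' ob i₂ o' ib ob' := by
    intro i' i i₂ o'
    rw [hVswap i i' o', hVswap i₂ i' o']
    exact Finset.sum_congr rfl fun ib' _ => Finset.sum_congr rfl fun ob _ =>
      Finset.sum_congr rfl fun ib _ => Finset.sum_congr rfl fun ob' _ => by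
        rw [hrr i' ib' ob i i₂ o' ib ob']
  have eX : ∑ ia', ∑ oa, ∑ ia, ∑ oa',
        (∑ ib', ∑ ob, ∑ ib, ∑ ob', F ib' ob ib ob' * rrOA' W ia' oa ib' ob ia oa' ib ob')
      = ∑ ia', ∑ oa, ∑ ia, ∑ oa', ∑ ib', ∑ ob, ∑ ib, ∑ ob',
          F ib' ob ib ob' * W ia' oa ib' ob ia oa' ib ob' := by
    refine Finset.sum_congr rfl fun ia' _ => Finset.sum_congr rfl fun oa _ =>
      Finset.sum_congr rfl fun ia _ => ?_
    have eR : ∑ oa', ∑ ib', ∑ ob, ∑ ib, ∑ ob', F ib' ob ib ob' *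
          W ia' oa ib' ob ia oa' ib ob'
        = ∑ ib', ∑ ob, ∑ ib, ∑ ob', F ib' ob ib ob' *
            ∑ j, W ia' oa ib' ob ia j ib ob' := by
      rw [swap1_4 (fun oa' ib' ob ib ob' => F ib' ob ib ob' *
        W ia' oa ib' ob ia oa' ib ob')]
      exact Finset.sum_congr rfl fun _ _ => Finset.sum_congr rfl fun _ _ =>
        Finset.sum_congr rfl fun _ _ => Finset.sum_congr rfl fun _ _ =>
          (Finset.mul_sum _ _ _).symm
    calc ∑ oa', ∑ ib', ∑ ob, ∑ ib, ∑ ob', F ib' ob ib ob' *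
            rrOA' W ia' oa ib' ob ia oa' ib ob'
        = ∑ _oa' : OA', ∑ ib', ∑ ob, ∑ ib, ∑ ob', F ib' ob ib ob' *
            ((∑ j, W ia' oa ib' ob ia j ib ob') / (Fintype.card OA' : ℝ)) :=
          Finset.sum_congr rfl fun oa' _ => rfl
      _ = (Fintype.card OA' : ℝ) * ∑ ib', ∑ ob, ∑ ib, ∑ ob', F ib' ob ib ob' *
            ((∑ j, W ia' oa ib' ob ia j ib ob') / (Fintype.card OA' : ℝ)) := by
          rw [Finset.sum_const, Finset.card_univ, nsmul_eq_mul]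
      _ = ∑ ib', ∑ ob, ∑ ib, ∑ ob', F ib' ob ib ob' *
            ∑ j, W ia' oa ib' ob ia j ib ob' := by
          rw [Finset.mul_sum]
          refine Finset.sum_congr rfl fun ib' _ => ?_
          rw [Finset.mul_sum]
          refine Finset.sum_congr rfl fun ob _ => ?_
          rw [Finset.mul_sum]
          refine Finset.sum_congr rfl fun ib _ => ?_
          rw [Finset.mul_sum]
          refine Finset.sum_congr rfl fun ob' _ => ?_
          field_simp
      _ = ∑ oa', ∑ ib', ∑ ob, ∑ ib, ∑ ob', F ib' ob ib ob' *
            W ia' oa ib' ob ia oa' ib ob' := eR.symm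
  exact (reduce_core SA (fun ia' oa ia oa' => ∑ ib', ∑ ob, ∑ ib, ∑ ob',
    F ib' ob ib ob' * rrOA' W ia' oa ib' ob ia oa' ib ob') hSA1 hSA2 hV1 hV2).trans
    (by rw [eX])

lemma normB (W : WTen IA' OA IB' OB IA OA' IB OB')
    (SB : OpTen IB' OB IB OB') (HA : IB' → OB → IB → OB' → ℝ)
    (hHA : ∀ ib' ob ib ob', HA ib' ob ib ob'
      = ∑ ia', ∑ oa, ∑ ia, ∑ oa', W ia' oa ib' ob ia oa' ib ob')
    (hSB1 : ∀ i' o o₂ i, ∑ o', SB i' o i o' = ∑ o', SB i' o₂ i o')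
    (hSB2 : ∀ i' o, ∑ i, ∑ o', SB i' o i o' = 1)
    (hHA1 : ∀ ib' ob ib ob' ob'₂, HA ib' ob ib ob' = HA ib' ob ib ob'₂)
    (hHA2 : ∀ ib' ib ib₂ ob', ∑ ob, HA ib' ob ib ob' = ∑ ob, HA ib' ob ib₂ ob')
    (htot : ∑ ib', ∑ ob, ∑ ib, ∑ ob', HA ib' ob ib ob'
      = ((Fintype.card IA : ℝ) * (Fintype.card OA' : ℝ)) *
        ((Fintype.card IB : ℝ) * (Fintype.card OB' : ℝ))) :
    (1 / ((Fintype.card OA' : ℝ) * (Fintype.card IA : ℝ))) *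
      ∑ ia', ∑ oa, ∑ ia, ∑ oa', ∑ ib', ∑ ob, ∑ ib, ∑ ob',
        SB ib' ob ib ob' * W ia' oa ib' ob ia oa' ib ob' = 1 := by
  have hcA' : ((Fintype.card OA' : ℝ)) ≠ 0 := by exact_mod_cast Fintype.card_ne_zero
  have hcIA : ((Fintype.card IA : ℝ)) ≠ 0 := by exact_mod_cast Fintype.card_ne_zero
  have hcB' : ((Fintype.card OB' : ℝ)) ≠ 0 := by exact_mod_cast Fintype.card_ne_zero
  have hcIB : ((Fintype.card IB : ℝ)) ≠ 0 := by exact_mod_cast Fintype.card_ne_zero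
  have e1 : ∑ ia', ∑ oa, ∑ ia, ∑ oa', ∑ ib', ∑ ob, ∑ ib, ∑ ob',
        SB ib' ob ib ob' * W ia' oa ib' ob ia oa' ib ob'
      = ∑ ib', ∑ ob, ∑ ib, ∑ ob', SB ib' ob ib ob' * HA ib' ob ib ob' := by
    rw [swap44 (fun ia' oa ia oa' ib' ob ib ob' =>
      SB ib' ob ib ob' * W ia' oa ib' ob ia oa' ib ob')]
    refine Finset.sum_congr rfl fun ib' _ => Finset.sum_congr rfl fun ob _ =>
      Finset.sum_congr rfl fun ib _ => Finset.sum_congr rfl fun ob' _ => ?_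
    simp only [← Finset.mul_sum]
    rw [hHA]
  rw [e1, reduce_core SB HA hSB1 hSB2 hHA1 hHA2, htot]
  field_simp

lemma coreB (W : WTen IA' OA IB' OB IA OA' IB OB')
    (SB : OpTen IB' OB IB OB') (F : OpTen IA' OA IA OA')
    (hSB1 : ∀ i' o o₂ i, ∑ o', SB i' o i o' = ∑ o', SB i' o₂ i o')
    (hSB2 : ∀ i' o, ∑ i, ∑ o', SB i' o i o' = 1)
    (hC4B : ∀ ia' oa ib' ia oa' ib ib₂ ob',
      ∑ ob, W ia' oa ib' ob ia oa' ib ob' = ∑ ob, W ia' oa ib' ob ia oa' ib₂ ob') :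
    ∑ ib', ∑ ob, ∑ ib, ∑ ob', SB ib' ob ib ob' *
        (∑ ia', ∑ oa, ∑ ia, ∑ oa', F ia' oa ia oa' * rrOB' W ia' oa ib' ob ia oa' ib ob')
      = (1 / ((Fintype.card OB' : ℝ) * (Fintype.card IB : ℝ))) *
        ∑ ib', ∑ ob, ∑ ib, ∑ ob', ∑ ia', ∑ oa, ∑ ia, ∑ oa',
          F ia' oa ia oa' * W ia' oa ib' ob ia oa' ib ob' := by
  have hcB' : ((Fintype.card OB' : ℝ)) ≠ 0 := by exact_mod_cast Fintype.card_ne_zero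
  have hrr : ∀ ia' oa ib' ia oa' ib ib₂ ob',
      ∑ ob, rrOB' W ia' oa ib' ob ia oa' ib ob'
        = ∑ ob, rrOB' W ia' oa ib' ob ia oa' ib₂ ob' := by
    intro ia' oa ib' ia oa' ib ib₂ ob'
    simp only [rrOB', ← Finset.sum_div]
    congr 1
    rw [Finset.sum_comm]
    conv_rhs => rw [Finset.sum_comm]
    exact Finset.sum_congr rfl fun j _ => hC4B ia' oa ib' ia oa' ib ib₂ j
  have hVswap : ∀ (ibb : IB) (ib' : IB') (ob' : OB'),
      (∑ ob, ∑ ia', ∑ oa, ∑ ia, ∑ oa', F ia' oa ia oa' *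
          rrOB' W ia' oa ib' ob ia oa' ibb ob')
        = ∑ ia', ∑ oa, ∑ ia, ∑ oa', F ia' oa ia oa' *
            ∑ ob, rrOB' W ia' oa ib' ob ia oa' ibb ob' := by
    intro ibb ib' ob'
    rw [swap1_4 (fun ob ia' oa ia oa' =>
      F ia' oa ia oa' * rrOB' W ia' oa ib' ob ia oa' ibb ob')]
    exact Finset.sum_congr rfl fun _ _ => Finset.sum_congr rfl fun _ _ =>
      Finset.sum_congr rfl fun _ _ => Finset.sum_congr rfl fun _ _ =>
        (Finset.mul_sum _ _ _).symm
  have hV1 : ∀ (i' : IB') (o : OB) (i : IB) (o' o'₂ : OB'),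
      (∑ ia', ∑ oa, ∑ ia, ∑ oa', F ia' oa ia oa' * rrOB' W ia' oa i' o ia oa' i o')
        = ∑ ia', ∑ oa, ∑ ia, ∑ oa', F ia' oa ia oa' * rrOB' W ia' oa i' o ia oa' i o'₂ :=
    fun _ _ _ _ _ => rfl
  have hV2 : ∀ (i' : IB') (i i₂ : IB) (o' : OB'),
      (∑ o, ∑ ia', ∑ oa, ∑ ia, ∑ oa', F ia' oa ia oa' * rrOB' W ia' oa i' o ia oa' i o')
        = ∑ o, ∑ ia', ∑ oa, ∑ ia, ∑ oa', F ia' oa ia oa' *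
            rrOB' W ia' oa i' o ia oa' i₂ o' := by
    intro i' i i₂ o'
    rw [hVswap i i' o', hVswap i₂ i' o']
    exact Finset.sum_congr rfl fun ia' _ => Finset.sum_congr rfl fun oa _ =>
      Finset.sum_congr rfl fun ia _ => Finset.sum_congr rfl fun oa' _ => by
        rw [hrr ia' oa i' ia oa' i i₂ o']
  have eX : ∑ ib', ∑ ob, ∑ ib, ∑ ob',
        (∑ ia', ∑ oa, ∑ ia, ∑ oa', F ia' oa ia oa' * rrOB' W ia' oa ib' ob ia oa' ib ob')
      = ∑ ib', ∑ ob, ∑ ib, ∑ ob', ∑ ia', ∑ oa, ∑ ia, ∑ oa',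
          F ia' oa ia oa' * W ia' oa ib' ob ia oa' ib ob' := by
    refine Finset.sum_congr rfl fun ib' _ => Finset.sum_congr rfl fun ob _ =>
      Finset.sum_congr rfl fun ib _ => ?_
    have eR : ∑ ob', ∑ ia', ∑ oa, ∑ ia, ∑ oa', F ia' oa ia oa' *
          W ia' oa ib' ob ia oa' ib ob'
        = ∑ ia', ∑ oa, ∑ ia, ∑ oa', F ia' oa ia oa' *
            ∑ j, W ia' oa ib' ob ia oa' ib j := by
      rw [swap1_4 (fun ob' ia' oa ia oa' => F ia' oa ia oa' *
        W ia' oa ib' ob ia oa' ib ob')]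
      exact Finset.sum_congr rfl fun _ _ => Finset.sum_congr rfl fun _ _ =>
        Finset.sum_congr rfl fun _ _ => Finset.sum_congr rfl fun _ _ =>
          (Finset.mul_sum _ _ _).symm
    calc ∑ ob', ∑ ia', ∑ oa, ∑ ia, ∑ oa', F ia' oa ia oa' *
            rrOB' W ia' oa ib' ob ia oa' ib ob'
        = ∑ _ob' : OB', ∑ ia', ∑ oa, ∑ ia, ∑ oa', F ia' oa ia oa' *
            ((∑ j, W ia' oa ib' ob ia oa' ib j) / (Fintype.card OB' : ℝ)) :=
          Finset.sum_congr rfl fun ob' _ => rfl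
      _ = (Fintype.card OB' : ℝ) * ∑ ia', ∑ oa, ∑ ia, ∑ oa', F ia' oa ia oa' *
            ((∑ j, W ia' oa ib' ob ia oa' ib j) / (Fintype.card OB' : ℝ)) := by
          rw [Finset.sum_const, Finset.card_univ, nsmul_eq_mul]
      _ = ∑ ia', ∑ oa, ∑ ia, ∑ oa', F ia' oa ia oa' *
            ∑ j, W ia' oa ib' ob ia oa' ib j := by
          rw [Finset.mul_sum]
          refine Finset.sum_congr rfl fun ia' _ => ?_
          rw [Finset.mul_sum]
          refine Finset.sum_congr rfl fun oa _ => ?_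
          rw [Finset.mul_sum]
          refine Finset.sum_congr rfl fun ia _ => ?_
          rw [Finset.mul_sum]
          refine Finset.sum_congr rfl fun oa' _ => ?_
          field_simp
      _ = ∑ ob', ∑ ia', ∑ oa, ∑ ia, ∑ oa', F ia' oa ia oa' *
            W ia' oa ib' ob ia oa' ib ob' := eR.symm
  exact (reduce_core SB (fun ib' ob ib ob' => ∑ ia', ∑ oa, ∑ ia, ∑ oa',
    F ia' oa ia oa' * rrOB' W ia' oa ib' ob ia oa' ib ob') hSB1 hSB2 hV1 hV2).trans
    (by rw [eX])

lemma normA (W : WTen IA' OA IB' OB IA OA' IB OB')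
    (SA : OpTen IA' OA IA OA') (HB : IA' → OA → IA → OA' → ℝ)
    (hHB : ∀ ia' oa ia oa', HB ia' oa ia oa'
      = ∑ ib', ∑ ob, ∑ ib, ∑ ob', W ia' oa ib' ob ia oa' ib ob')
    (hSA1 : ∀ i' o o₂ i, ∑ o', SA i' o i o' = ∑ o', SA i' o₂ i o')
    (hSA2 : ∀ i' o, ∑ i, ∑ o', SA i' o i o' = 1)
    (hHB1 : ∀ ia' oa ia oa' oa'₂, HB ia' oa ia oa' = HB ia' oa ia oa'₂)
    (hHB2 : ∀ ia' ia ia₂ oa', ∑ oa, HB ia' oa ia oa' = ∑ oa, HB ia' oa ia₂ oa')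
    (htot : ∑ ia', ∑ oa, ∑ ia, ∑ oa', HB ia' oa ia oa'
      = ((Fintype.card IA : ℝ) * (Fintype.card OA' : ℝ)) *
        ((Fintype.card IB : ℝ) * (Fintype.card OB' : ℝ))) :
    (1 / ((Fintype.card OB' : ℝ) * (Fintype.card IB : ℝ))) *
      ∑ ib', ∑ ob, ∑ ib, ∑ ob', ∑ ia', ∑ oa, ∑ ia, ∑ oa',
        SA ia' oa ia oa' * W ia' oa ib' ob ia oa' ib ob' = 1 := by
  have hcA' : ((Fintype.card OA' : ℝ)) ≠ 0 := by exact_mod_cast Fintype.card_ne_zero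
  have hcIA : ((Fintype.card IA : ℝ)) ≠ 0 := by exact_mod_cast Fintype.card_ne_zero
  have hcB' : ((Fintype.card OB' : ℝ)) ≠ 0 := by exact_mod_cast Fintype.card_ne_zero
  have hcIB : ((Fintype.card IB : ℝ)) ≠ 0 := by exact_mod_cast Fintype.card_ne_zero
  have e1 : ∑ ib', ∑ ob, ∑ ib, ∑ ob', ∑ ia', ∑ oa, ∑ ia, ∑ oa',
        SA ia' oa ia oa' * W ia' oa ib' ob ia oa' ib ob'
      = ∑ ia', ∑ oa, ∑ ia, ∑ oa', SA ia' oa ia oa' * HB ia' oa ia oa' := by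
    rw [swap44 (fun ib' ob ib ob' ia' oa ia oa' =>
      SA ia' oa ia oa' * W ia' oa ib' ob ia oa' ib ob')]
    refine Finset.sum_congr rfl fun ia' _ => Finset.sum_congr rfl fun oa _ =>
      Finset.sum_congr rfl fun ia _ => Finset.sum_congr rfl fun oa' _ => ?_
    simp only [← Finset.mul_sum]
    rw [hHB]
  rw [e1, reduce_core SA HB hSA1 hSA2 hHB1 hHB2, htot]
  field_simp

end AuxCore

section AuxDetOp

lemma div_inj_aux {a b c : ℝ} (hc : c ≠ 0) (h : a / c = b / c) : a = b := by
  rw [div_eq_div_iff hc hc] at h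
  exact mul_right_cancel₀ hc h

variable {I' O I O' : Type}
variable [Fintype I'] [Fintype O] [Fintype I] [Fintype O']

lemma detop_const_o [Nonempty O'] (T : OpTen I' O I O') (hT : IsDetOp T)
    (i' : I') (o o₂ : O) (i : I) : ∑ o', T i' o i o' = ∑ o', T i' o₂ i o' := by
  obtain ⟨o'₀⟩ := (inferInstance : Nonempty O')
  have hc : ((Fintype.card O' : ℝ)) ≠ 0 := by exact_mod_cast Fintype.card_ne_zero
  have h1 := congrFun (congrFun (congrFun (congrFun hT.2.2 i') o) i) o'₀
  have h2 := congrFun (congrFun (congrFun (congrFun hT.2.2 i') o₂) i) o'₀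
  simp only [rrOpO', rrOpO, ← Finset.sum_div] at h1 h2
  exact div_inj_aux hc (h1.trans h2.symm)

lemma detop_norm_one [Nonempty I'] [Nonempty O] [Nonempty I] [Nonempty O']
    (T : OpTen I' O I O') (hT : IsDetOp T) (i' : I') (o : O) :
    ∑ i, ∑ o', T i' o i o' = 1 := by
  obtain ⟨i₀⟩ := (inferInstance : Nonempty I)
  obtain ⟨o'₀⟩ := (inferInstance : Nonempty O')
  have hcI' : ((Fintype.card I' : ℝ)) ≠ 0 := by exact_mod_cast Fintype.card_ne_zero
  have hcO : ((Fintype.card O : ℝ)) ≠ 0 := by exact_mod_cast Fintype.card_ne_zero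
  have hcI : ((Fintype.card I : ℝ)) ≠ 0 := by exact_mod_cast Fintype.card_ne_zero
  have hcO' : ((Fintype.card O' : ℝ)) ≠ 0 := by exact_mod_cast Fintype.card_ne_zero
  have h := congrFun (congrFun (congrFun (congrFun hT.2.1 i') o) i₀) o'₀
  simp only [rrOpI, rrOpO', rrOpI', rrOpO, ← Finset.sum_div] at h
  -- h : (∑ i, ∑ o', T i' o i o') / _ / _ = (∑ i'', ∑ i, ∑ o2, ∑ j, T i'' o2 i j) / ... 
  have htot : ∑ i'', ∑ i, ∑ o2, ∑ j, T i'' o2 i j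
      = (Fintype.card I' : ℝ) * (Fintype.card O : ℝ) := by
    have : ∑ i'', ∑ i, ∑ o2, ∑ j, T i'' o2 i j = totOp T :=
      Finset.sum_congr rfl fun i'' _ => Finset.sum_comm
    rw [this, hT.1]
  rw [htot] at h
  field_simp at h
  have hK : ((Fintype.card O' : ℝ) * (Fintype.card O : ℝ) * (Fintype.card I : ℝ) *
      (Fintype.card I' : ℝ)) ≠ 0 := by
    exact mul_ne_zero (mul_ne_zero (mul_ne_zero hcO' hcO) hcI) hcI'
  have h' : (∑ i, ∑ o', T i' o i o') * ((Fintype.card O' : ℝ) * (Fintype.card O : ℝ) *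
      (Fintype.card I : ℝ) * (Fintype.card I' : ℝ)) = 1 * ((Fintype.card O' : ℝ) *
      (Fintype.card O : ℝ) * (Fintype.card I : ℝ) * (Fintype.card I' : ℝ)) := by
    rw [h]
  exact mul_right_cancel₀ hK h'
end AuxDetOp

section AuxProc

variable {IA' OA IB' OB IA OA' IB OB' : Type}
variable [Fintype IA'] [Fintype OA] [Fintype IB'] [Fintype OB]
variable [Fintype IA] [Fintype OA'] [Fintype IB] [Fintype OB']
variable [Nonempty IA'] [Nonempty OA] [Nonempty IB'] [Nonempty OB]
variable [Nonempty IA] [Nonempty OA'] [Nonempty IB] [Nonempty OB']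

lemma procC4A (W : WTen IA' OA IB' OB IA OA' IB OB') (h : rrOA W = rrIA (rrOA W)) :
    ∀ ia' ib' ob ia ia₂ oa' ib ob',
      ∑ oa, W ia' oa ib' ob ia oa' ib ob' = ∑ oa, W ia' oa ib' ob ia₂ oa' ib ob' := by
  intro ia' ib' ob ia ia₂ oa' ib ob'
  obtain ⟨oa₀⟩ := (inferInstance : Nonempty OA)
  have hc : ((Fintype.card OA : ℝ)) ≠ 0 := by exact_mod_cast Fintype.card_ne_zero
  have h1 := congrFun (congrFun (congrFun (congrFun (congrFun (congrFun (congrFun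
    (congrFun h ia') oa₀) ib') ob) ia) oa') ib) ob'
  have h2 := congrFun (congrFun (congrFun (congrFun (congrFun (congrFun (congrFun
    (congrFun h ia') oa₀) ib') ob) ia₂) oa') ib) ob'
  simp only [rrOA, rrIA, ← Finset.sum_div] at h1 h2
  exact div_inj_aux hc (h1.trans h2.symm)

lemma procC4B (W : WTen IA' OA IB' OB IA OA' IB OB') (h : rrOB W = rrIB (rrOB W)) :
    ∀ ia' oa ib' ia oa' ib ib₂ ob',
      ∑ ob, W ia' oa ib' ob ia oa' ib ob' = ∑ ob, W ia' oa ib' ob ia oa' ib₂ ob' := by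
  intro ia' oa ib' ia oa' ib ib₂ ob'
  obtain ⟨ob₀⟩ := (inferInstance : Nonempty OB)
  have hc : ((Fintype.card OB : ℝ)) ≠ 0 := by exact_mod_cast Fintype.card_ne_zero
  have h1 := congrFun (congrFun (congrFun (congrFun (congrFun (congrFun (congrFun
    (congrFun h ia') oa) ib') ob₀) ia) oa') ib) ob'
  have h2 := congrFun (congrFun (congrFun (congrFun (congrFun (congrFun (congrFun
    (congrFun h ia') oa) ib') ob₀) ia) oa') ib₂) ob'
  simp only [rrOB, rrIB, ← Finset.sum_div] at h1 h2
  exact div_inj_aux hc (h1.trans h2.symm)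

lemma procC1 (W : WTen IA' OA IB' OB IA OA' IB OB') (h : rrA W = rrOB' (rrA W)) :
    ∀ ib' ob ib ob' ob'₂,
      (∑ ia', ∑ oa, ∑ ia, ∑ oa', W ia' oa ib' ob ia oa' ib ob')
        = ∑ ia', ∑ oa, ∑ ia, ∑ oa', W ia' oa ib' ob ia oa' ib ob'₂ := by
  intro ib' ob ib ob' ob'₂
  obtain ⟨ia'₀⟩ := (inferInstance : Nonempty IA')
  obtain ⟨oa₀⟩ := (inferInstance : Nonempty OA)
  obtain ⟨ia₀⟩ := (inferInstance : Nonempty IA)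
  obtain ⟨oa'₀⟩ := (inferInstance : Nonempty OA')
  have hcA' : ((Fintype.card OA' : ℝ)) ≠ 0 := by exact_mod_cast Fintype.card_ne_zero
  have hcOA : ((Fintype.card OA : ℝ)) ≠ 0 := by exact_mod_cast Fintype.card_ne_zero
  have hcIA : ((Fintype.card IA : ℝ)) ≠ 0 := by exact_mod_cast Fintype.card_ne_zero
  have hcIA' : ((Fintype.card IA' : ℝ)) ≠ 0 := by exact_mod_cast Fintype.card_ne_zero
  have h1 := congrFun (congrFun (congrFun (congrFun (congrFun (congrFun (congrFun
    (congrFun h ia'₀) oa₀) ib') ob) ia₀) oa'₀) ib) ob'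
  have h2 := congrFun (congrFun (congrFun (congrFun (congrFun (congrFun (congrFun
    (congrFun h ia'₀) oa₀) ib') ob) ia₀) oa'₀) ib) ob'₂
  simp only [rrA, rrIA', rrIA, rrOA, rrOA', rrOB', ← Finset.sum_div] at h1 h2
  have h3 := div_inj_aux hcA' (div_inj_aux hcOA (div_inj_aux hcIA
    (div_inj_aux hcIA' (h1.trans h2.symm))))
  calc ∑ ia', ∑ oa, ∑ ia, ∑ oa', W ia' oa ib' ob ia oa' ib ob'
      = ∑ ia', ∑ ia, ∑ oa, ∑ oa', W ia' oa ib' ob ia oa' ib ob' :=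
        Finset.sum_congr rfl fun _ _ => Finset.sum_comm
    _ = ∑ ia', ∑ ia, ∑ oa, ∑ oa', W ia' oa ib' ob ia oa' ib ob'₂ := h3
    _ = ∑ ia', ∑ oa, ∑ ia, ∑ oa', W ia' oa ib' ob ia oa' ib ob'₂ :=
        (Finset.sum_congr rfl fun _ _ => Finset.sum_comm)

lemma procC2 (W : WTen IA' OA IB' OB IA OA' IB OB') (h : rrB W = rrOA' (rrB W)) :
    ∀ ia' oa ia oa' oa'₂,
      (∑ ib', ∑ ob, ∑ ib, ∑ ob', W ia' oa ib' ob ia oa' ib ob')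
        = ∑ ib', ∑ ob, ∑ ib, ∑ ob', W ia' oa ib' ob ia oa'₂ ib ob' := by
  intro ia' oa ia oa' oa'₂
  obtain ⟨ib'₀⟩ := (inferInstance : Nonempty IB')
  obtain ⟨ob₀⟩ := (inferInstance : Nonempty OB)
  obtain ⟨ib₀⟩ := (inferInstance : Nonempty IB)
  obtain ⟨ob'₀⟩ := (inferInstance : Nonempty OB')
  have hcB' : ((Fintype.card OB' : ℝ)) ≠ 0 := by exact_mod_cast Fintype.card_ne_zero
  have hcOB : ((Fintype.card OB : ℝ)) ≠ 0 := by exact_mod_cast Fintype.card_ne_zero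
  have hcIB : ((Fintype.card IB : ℝ)) ≠ 0 := by exact_mod_cast Fintype.card_ne_zero
  have hcIB' : ((Fintype.card IB' : ℝ)) ≠ 0 := by exact_mod_cast Fintype.card_ne_zero
  have h1 := congrFun (congrFun (congrFun (congrFun (congrFun (congrFun (congrFun
    (congrFun h ia') oa) ib'₀) ob₀) ia) oa') ib₀) ob'₀
  have h2 := congrFun (congrFun (congrFun (congrFun (congrFun (congrFun (congrFun
    (congrFun h ia') oa) ib'₀) ob₀) ia) oa'₂) ib₀) ob'₀
  simp only [rrB, rrIB', rrIB, rrOB, rrOB', rrOA', ← Finset.sum_div] at h1 h2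
  have h3 := div_inj_aux hcB' (div_inj_aux hcOB (div_inj_aux hcIB
    (div_inj_aux hcIB' (h1.trans h2.symm))))
  calc ∑ ib', ∑ ob, ∑ ib, ∑ ob', W ia' oa ib' ob ia oa' ib ob'
      = ∑ ib', ∑ ib, ∑ ob, ∑ ob', W ia' oa ib' ob ia oa' ib ob' :=
        Finset.sum_congr rfl fun _ _ => Finset.sum_comm
    _ = ∑ ib', ∑ ib, ∑ ob, ∑ ob', W ia' oa ib' ob ia oa'₂ ib ob' := h3
    _ = ∑ ib', ∑ ob, ∑ ib, ∑ ob', W ia' oa ib' ob ia oa'₂ ib ob' :=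
        (Finset.sum_congr rfl fun _ _ => Finset.sum_comm)

end AuxProc

section AuxMono

variable {IA' OA IB' OB IA OA' IB OB' : Type}
variable [Fintype IA'] [Fintype OA] [Fintype IB'] [Fintype OB]
variable [Fintype IA] [Fintype OA'] [Fintype IB] [Fintype OB']
variable {A X B Y : Type}

lemma corr_nonneg (TA : A → X → OpTen IA' OA IA OA') (TB : B → Y → OpTen IB' OB IB OB')
    (V : WTen IA' OA IB' OB IA OA' IB OB')
    (hTAnn : ∀ a x i' o i o', 0 ≤ TA a x i' o i o')
    (hTBnn : ∀ b y i' o i o', 0 ≤ TB b y i' o i o')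
    (hV : ∀ ia' oa ib' ob ia oa' ib ob', 0 ≤ V ia' oa ib' ob ia oa' ib ob')
    (a : A) (b : B) (x : X) (y : Y) : 0 ≤ corr TA TB V a b x y := by
  unfold corr
  refine Finset.sum_nonneg fun _ _ => Finset.sum_nonneg fun _ _ =>
    Finset.sum_nonneg fun _ _ => Finset.sum_nonneg fun _ _ =>
    Finset.sum_nonneg fun _ _ => Finset.sum_nonneg fun _ _ =>
    Finset.sum_nonneg fun _ _ => Finset.sum_nonneg fun _ _ => ?_
  exact mul_nonneg (mul_nonneg (hTAnn _ _ _ _ _ _) (hTBnn _ _ _ _ _ _)) (hV _ _ _ _ _ _ _ _)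

lemma corr_mono_lin (TA : A → X → OpTen IA' OA IA OA') (TB : B → Y → OpTen IB' OB IB OB')
    (W U1 U2 : WTen IA' OA IB' OB IA OA' IB OB') (c : ℝ)
    (hTAnn : ∀ a x i' o i o', 0 ≤ TA a x i' o i o')
    (hTBnn : ∀ b y i' o i o', 0 ≤ TB b y i' o i o')
    (hpt : ∀ ia' oa ib' ob ia oa' ib ob',
      W ia' oa ib' ob ia oa' ib ob' ≤ U1 ia' oa ib' ob ia oa' ib ob' +
        c * U2 ia' oa ib' ob ia oa' ib ob')
    (a : A) (b : B) (x : X) (y : Y) :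
    corr TA TB W a b x y ≤ corr TA TB U1 a b x y + c * corr TA TB U2 a b x y := by
  have step1 : corr TA TB W a b x y ≤
      ∑ ia', ∑ oa, ∑ ib', ∑ ob, ∑ ia, ∑ oa', ∑ ib, ∑ ob',
        (TA a x ia' oa ia oa' * TB b y ib' ob ib ob' * U1 ia' oa ib' ob ia oa' ib ob' +
          c * (TA a x ia' oa ia oa' * TB b y ib' ob ib ob' *
            U2 ia' oa ib' ob ia oa' ib ob')) := by
    unfold corr
    refine Finset.sum_le_sum fun ia' _ => Finset.sum_le_sum fun oa _ =>
      Finset.sum_le_sum fun ib' _ => Finset.sum_le_sum fun ob _ =>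
      Finset.sum_le_sum fun ia _ => Finset.sum_le_sum fun oa' _ =>
      Finset.sum_le_sum fun ib _ => Finset.sum_le_sum fun ob' _ => ?_
    have h1 := mul_le_mul_of_nonneg_left (hpt ia' oa ib' ob ia oa' ib ob')
      (mul_nonneg (hTAnn a x ia' oa ia oa') (hTBnn b y ib' ob ib ob'))
    nlinarith [h1]
  refine step1.trans (le_of_eq ?_)
  simp only [Finset.sum_add_distrib, ← Finset.mul_sum]
  rfl

end AuxMono


set_option maxHeartbeats 1000000 in
theorem statement_11
    {IA' OA IB' OB IA OA' IB OB' : Type}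
    [Fintype IA'] [Fintype OA] [Fintype IB'] [Fintype OB]
    [Fintype IA] [Fintype OA'] [Fintype IB] [Fintype OB']
    [Nonempty IA'] [Nonempty OA] [Nonempty IB'] [Nonempty OB]
    [Nonempty IA] [Nonempty OA'] [Nonempty IB] [Nonempty OB']
    (W : WTen IA' OA IB' OB IA OA' IB OB') (hW : IsBoxworldProcess W)
    (TA : Fin 2 → Fin 2 → OpTen IA' OA IA OA')
    (TB : Fin 2 → Fin 2 → OpTen IB' OB IB OB')
    (hTA : IsLocalOps TA) (hTB : IsLocalOps TB) :
    (1 / 4 : ℝ) * ∑ a, ∑ b, ∑ x, ∑ y,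
        (if a = y then (1 : ℝ) else 0) * (if b = x then (1 : ℝ) else 0) *
          corr TA TB W a b x y ≤
      1 - 1 / (2 * (min (Fintype.card OA') (Fintype.card OB') : ℝ)) := by
  classical
  obtain ⟨hWnn, hWtot, hC1f, hC2f, hC3f, hC4Af, hC4Bf⟩ := hW
  obtain ⟨hTAnn, hTAdet⟩ := hTA
  obtain ⟨hTBnn, hTBdet⟩ := hTB
  have hcA'0 : (0:ℝ) < (Fintype.card OA' : ℝ) := by exact_mod_cast Fintype.card_pos
  have hcB'0 : (0:ℝ) < (Fintype.card OB' : ℝ) := by exact_mod_cast Fintype.card_pos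
  have hcA'1 : (1:ℝ) ≤ (Fintype.card OA' : ℝ) := by exact_mod_cast Fintype.card_pos
  have hcB'1 : (1:ℝ) ≤ (Fintype.card OB' : ℝ) := by exact_mod_cast Fintype.card_pos
  have hC4A := procC4A W hC4Af
  have hC4B := procC4B W hC4Bf
  have hHA1 := procC1 W hC1f
  have hHB1 := procC2 W hC2f
  have hU1nn : ∀ ia' oa ib' ob ia oa' ib ob',
      0 ≤ rrOA' W ia' oa ib' ob ia oa' ib ob' := by
    intro ia' oa ib' ob ia oa' ib ob'
    exact div_nonneg (Finset.sum_nonneg fun j _ => hWnn ia' oa ib' ob ia j ib ob')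
      (Nat.cast_nonneg _)
  have hU2nn : ∀ ia' oa ib' ob ia oa' ib ob',
      0 ≤ rrOB' W ia' oa ib' ob ia oa' ib ob' := by
    intro ia' oa ib' ob ia oa' ib ob'
    exact div_nonneg (Finset.sum_nonneg fun j _ => hWnn ia' oa ib' ob ia oa' ib j)
      (Nat.cast_nonneg _)
  -- auxiliary facts for normalisation lemmas
  have hHA2 : ∀ ib' ib ib₂ ob',
      (∑ ob, ∑ ia', ∑ oa, ∑ ia, ∑ oa', W ia' oa ib' ob ia oa' ib ob')
        = ∑ ob, ∑ ia', ∑ oa, ∑ ia, ∑ oa', W ia' oa ib' ob ia oa' ib₂ ob' := by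
    intro ib' ib ib₂ ob'
    calc ∑ ob, ∑ ia', ∑ oa, ∑ ia, ∑ oa', W ia' oa ib' ob ia oa' ib ob'
        = ∑ ia', ∑ oa, ∑ ia, ∑ oa', ∑ ob, W ia' oa ib' ob ia oa' ib ob' :=
          swap1_4 fun ob ia' oa ia oa' => W ia' oa ib' ob ia oa' ib ob'
      _ = ∑ ia', ∑ oa, ∑ ia, ∑ oa', ∑ ob, W ia' oa ib' ob ia oa' ib₂ ob' :=
          Finset.sum_congr rfl fun ia' _ => Finset.sum_congr rfl fun oa _ =>
            Finset.sum_congr rfl fun ia _ => Finset.sum_congr rfl fun oa' _ =>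
              hC4B ia' oa ib' ia oa' ib ib₂ ob'
      _ = ∑ ob, ∑ ia', ∑ oa, ∑ ia, ∑ oa', W ia' oa ib' ob ia oa' ib₂ ob' :=
          (swap1_4 fun ob ia' oa ia oa' => W ia' oa ib' ob ia oa' ib₂ ob').symm
  have hHB2 : ∀ ia' ia ia₂ oa',
      (∑ oa, ∑ ib', ∑ ob, ∑ ib, ∑ ob', W ia' oa ib' ob ia oa' ib ob')
        = ∑ oa, ∑ ib', ∑ ob, ∑ ib, ∑ ob', W ia' oa ib' ob ia₂ oa' ib ob' := by
    intro ia' ia ia₂ oa'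
    calc ∑ oa, ∑ ib', ∑ ob, ∑ ib, ∑ ob', W ia' oa ib' ob ia oa' ib ob'
        = ∑ ib', ∑ ob, ∑ ib, ∑ ob', ∑ oa, W ia' oa ib' ob ia oa' ib ob' :=
          swap1_4 fun oa ib' ob ib ob' => W ia' oa ib' ob ia oa' ib ob'
      _ = ∑ ib', ∑ ob, ∑ ib, ∑ ob', ∑ oa, W ia' oa ib' ob ia₂ oa' ib ob' :=
          Finset.sum_congr rfl fun ib' _ => Finset.sum_congr rfl fun ob _ =>
            Finset.sum_congr rfl fun ib _ => Finset.sum_congr rfl fun ob' _ =>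
              hC4A ia' ib' ob ia ia₂ oa' ib ob'
      _ = ∑ oa, ∑ ib', ∑ ob, ∑ ib, ∑ ob', W ia' oa ib' ob ia₂ oa' ib ob' :=
          (swap1_4 fun oa ib' ob ib ob' => W ia' oa ib' ob ia₂ oa' ib ob').symm
  have htotB : ∑ ia', ∑ oa, ∑ ia, ∑ oa', ∑ ib', ∑ ob, ∑ ib, ∑ ob',
      W ia' oa ib' ob ia oa' ib ob'
      = ((Fintype.card IA : ℝ) * (Fintype.card OA' : ℝ)) *
        ((Fintype.card IB : ℝ) * (Fintype.card OB' : ℝ)) := by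
    rw [← tot_reorder W, hWtot]; ring
  have htotA : ∑ ib', ∑ ob, ∑ ib, ∑ ob', ∑ ia', ∑ oa, ∑ ia, ∑ oa',
      W ia' oa ib' ob ia oa' ib ob'
      = ((Fintype.card IA : ℝ) * (Fintype.card OA' : ℝ)) *
        ((Fintype.card IB : ℝ) * (Fintype.card OB' : ℝ)) := by
    calc ∑ ib', ∑ ob, ∑ ib, ∑ ob', ∑ ia', ∑ oa, ∑ ia, ∑ oa',
          W ia' oa ib' ob ia oa' ib ob'
        = ∑ ia', ∑ oa, ∑ ia, ∑ oa', ∑ ib', ∑ ob, ∑ ib, ∑ ob',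
            W ia' oa ib' ob ia oa' ib ob' :=
          (swap44 fun ia' oa ia oa' ib' ob ib ob' => W ia' oa ib' ob ia oa' ib ob').symm
      _ = _ := htotB
  -- the evaluation of Alice-outcome-summed correlations with rrOA' W
  have evalA : ∀ a b : Fin 2, (∑ a' : Fin 2, corr TA TB (rrOA' W) a' b b a)
      = 1 / ((Fintype.card OA' : ℝ) * (Fintype.card IA : ℝ)) *
        ∑ ia', ∑ oa, ∑ ia, ∑ oa', ∑ ib', ∑ ob, ∑ ib, ∑ ob',
          TB b a ib' ob ib ob' * W ia' oa ib' ob ia oa' ib ob' := by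
    intro a b
    calc ∑ a' : Fin 2, corr TA TB (rrOA' W) a' b b a
        = ∑ a' : Fin 2, ∑ ia', ∑ oa, ∑ ia, ∑ oa', TA a' b ia' oa ia oa' *
            ∑ ib', ∑ ob, ∑ ib, ∑ ob', TB b a ib' ob ib ob' *
              rrOA' W ia' oa ib' ob ia oa' ib ob' :=
          Finset.sum_congr rfl fun a' _ => corr_flatB TA TB (rrOA' W) a' b b a
      _ = ∑ ia', ∑ oa, ∑ ia, ∑ oa', ∑ a' : Fin 2, TA a' b ia' oa ia oa' *
            ∑ ib', ∑ ob, ∑ ib, ∑ ob', TB b a ib' ob ib ob' *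
              rrOA' W ia' oa ib' ob ia oa' ib ob' :=
          swap1_4 fun a' ia' oa ia oa' => TA a' b ia' oa ia oa' *
            ∑ ib', ∑ ob, ∑ ib, ∑ ob', TB b a ib' ob ib ob' *
              rrOA' W ia' oa ib' ob ia oa' ib ob'
      _ = ∑ ia', ∑ oa, ∑ ia, ∑ oa', (∑ a' : Fin 2, TA a' b ia' oa ia oa') *
            ∑ ib', ∑ ob, ∑ ib, ∑ ob', TB b a ib' ob ib ob' *
              rrOA' W ia' oa ib' ob ia oa' ib ob' :=
          Finset.sum_congr rfl fun ia' _ => Finset.sum_congr rfl fun oa _ =>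
            Finset.sum_congr rfl fun ia _ => Finset.sum_congr rfl fun oa' _ =>
              (Finset.sum_mul _ _ _).symm
      _ = _ := coreA W (fun i' o i o' => ∑ a' : Fin 2, TA a' b i' o i o') (TB b a)
            (fun i' o o₂ i => detop_const_o _ (hTAdet b) i' o o₂ i)
            (fun i' o => detop_norm_one _ (hTAdet b) i' o) hC4A
  have normBa : ∀ a : Fin 2,
      (∑ b : Fin 2, 1 / ((Fintype.card OA' : ℝ) * (Fintype.card IA : ℝ)) *
        ∑ ia', ∑ oa, ∑ ia, ∑ oa', ∑ ib', ∑ ob, ∑ ib, ∑ ob',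
          TB b a ib' ob ib ob' * W ia' oa ib' ob ia oa' ib ob') = 1 := by
    intro a
    rw [← Finset.mul_sum]
    have push : ∑ b : Fin 2, ∑ ia', ∑ oa, ∑ ia, ∑ oa', ∑ ib', ∑ ob, ∑ ib, ∑ ob',
          TB b a ib' ob ib ob' * W ia' oa ib' ob ia oa' ib ob'
        = ∑ ia', ∑ oa, ∑ ia, ∑ oa', ∑ ib', ∑ ob, ∑ ib, ∑ ob',
            (∑ b : Fin 2, TB b a ib' ob ib ob') * W ia' oa ib' ob ia oa' ib ob' := by
      calc ∑ b : Fin 2, ∑ ia', ∑ oa, ∑ ia, ∑ oa', ∑ ib', ∑ ob, ∑ ib, ∑ ob',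
            TB b a ib' ob ib ob' * W ia' oa ib' ob ia oa' ib ob'
          = ∑ ia', ∑ oa, ∑ ia, ∑ oa', ∑ b : Fin 2, ∑ ib', ∑ ob, ∑ ib, ∑ ob',
              TB b a ib' ob ib ob' * W ia' oa ib' ob ia oa' ib ob' :=
            swap1_4 fun b ia' oa ia oa' => ∑ ib', ∑ ob, ∑ ib, ∑ ob',
              TB b a ib' ob ib ob' * W ia' oa ib' ob ia oa' ib ob'
        _ = ∑ ia', ∑ oa, ∑ ia, ∑ oa', ∑ ib', ∑ ob, ∑ ib, ∑ ob',
              (∑ b : Fin 2, TB b a ib' ob ib ob') * W ia' oa ib' ob ia oa' ib ob' := by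
            refine Finset.sum_congr rfl fun ia' _ => Finset.sum_congr rfl fun oa _ =>
              Finset.sum_congr rfl fun ia _ => Finset.sum_congr rfl fun oa' _ => ?_
            calc ∑ b : Fin 2, ∑ ib', ∑ ob, ∑ ib, ∑ ob',
                  TB b a ib' ob ib ob' * W ia' oa ib' ob ia oa' ib ob'
                = ∑ ib', ∑ ob, ∑ ib, ∑ ob', ∑ b : Fin 2,
                    TB b a ib' ob ib ob' * W ia' oa ib' ob ia oa' ib ob' :=
                  swap1_4 fun b ib' ob ib ob' =>
                    TB b a ib' ob ib ob' * W ia' oa ib' ob ia oa' ib ob'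
              _ = ∑ ib', ∑ ob, ∑ ib, ∑ ob', (∑ b : Fin 2, TB b a ib' ob ib ob') *
                    W ia' oa ib' ob ia oa' ib ob' :=
                  Finset.sum_congr rfl fun _ _ => Finset.sum_congr rfl fun _ _ =>
                    Finset.sum_congr rfl fun _ _ => Finset.sum_congr rfl fun _ _ =>
                      (Finset.sum_mul _ _ _).symm
    rw [push]
    exact normB W (fun i' o i o' => ∑ b : Fin 2, TB b a i' o i o')
      (fun ib' ob ib ob' => ∑ ia', ∑ oa, ∑ ia, ∑ oa', W ia' oa ib' ob ia oa' ib ob')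
      (fun _ _ _ _ => rfl)
      (fun i' o o₂ i => detop_const_o _ (hTBdet a) i' o o₂ i)
      (fun i' o => detop_norm_one _ (hTBdet a) i' o)
      (fun ib' ob ib ob' ob'₂ => hHA1 ib' ob ib ob' ob'₂)
      (fun ib' ib ib₂ ob' => hHA2 ib' ib ib₂ ob') htotA
  have B1 : (∑ a : Fin 2, ∑ b : Fin 2, corr TA TB (rrOA' W) a b b a) ≤ 2 := by
    calc ∑ a : Fin 2, ∑ b : Fin 2, corr TA TB (rrOA' W) a b b a
        ≤ ∑ a : Fin 2, ∑ b : Fin 2,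
            (1 / ((Fintype.card OA' : ℝ) * (Fintype.card IA : ℝ)) *
              ∑ ia', ∑ oa, ∑ ia, ∑ oa', ∑ ib', ∑ ob, ∑ ib, ∑ ob',
                TB b a ib' ob ib ob' * W ia' oa ib' ob ia oa' ib ob') := by
          refine Finset.sum_le_sum fun a _ => Finset.sum_le_sum fun b _ => ?_
          refine le_trans (Finset.single_le_sum
            (f := fun a' => corr TA TB (rrOA' W) a' b b a)
            (fun a' _ => corr_nonneg TA TB _ hTAnn hTBnn hU1nn a' b b a)
            (Finset.mem_univ a)) ?_
          exact le_of_eq (evalA a b)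
      _ = ∑ a : Fin 2, (1:ℝ) := Finset.sum_congr rfl fun a _ => normBa a
      _ = 2 := by simp
  -- Bob-side versions
  have evalB : ∀ a b : Fin 2, (∑ b' : Fin 2, corr TA TB (rrOB' W) a b' b a)
      = 1 / ((Fintype.card OB' : ℝ) * (Fintype.card IB : ℝ)) *
        ∑ ib', ∑ ob, ∑ ib, ∑ ob', ∑ ia', ∑ oa, ∑ ia, ∑ oa',
          TA a b ia' oa ia oa' * W ia' oa ib' ob ia oa' ib ob' := by
    intro a b
    calc ∑ b' : Fin 2, corr TA TB (rrOB' W) a b' b a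
        = ∑ b' : Fin 2, ∑ ib', ∑ ob, ∑ ib, ∑ ob', TB b' a ib' ob ib ob' *
            ∑ ia', ∑ oa, ∑ ia, ∑ oa', TA a b ia' oa ia oa' *
              rrOB' W ia' oa ib' ob ia oa' ib ob' :=
          Finset.sum_congr rfl fun b' _ => corr_flatA TA TB (rrOB' W) a b' b a
      _ = ∑ ib', ∑ ob, ∑ ib, ∑ ob', ∑ b' : Fin 2, TB b' a ib' ob ib ob' *
            ∑ ia', ∑ oa, ∑ ia, ∑ oa', TA a b ia' oa ia oa' *
              rrOB' W ia' oa ib' ob ia oa' ib ob' :=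
          swap1_4 fun b' ib' ob ib ob' => TB b' a ib' ob ib ob' *
            ∑ ia', ∑ oa, ∑ ia, ∑ oa', TA a b ia' oa ia oa' *
              rrOB' W ia' oa ib' ob ia oa' ib ob'
      _ = ∑ ib', ∑ ob, ∑ ib, ∑ ob', (∑ b' : Fin 2, TB b' a ib' ob ib ob') *
            ∑ ia', ∑ oa, ∑ ia, ∑ oa', TA a b ia' oa ia oa' *
              rrOB' W ia' oa ib' ob ia oa' ib ob' :=
          Finset.sum_congr rfl fun ib' _ => Finset.sum_congr rfl fun ob _ =>
            Finset.sum_congr rfl fun ib _ => Finset.sum_congr rfl fun ob' _ =>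
              (Finset.sum_mul _ _ _).symm
      _ = _ := coreB W (fun i' o i o' => ∑ b' : Fin 2, TB b' a i' o i o') (TA a b)
            (fun i' o o₂ i => detop_const_o _ (hTBdet a) i' o o₂ i)
            (fun i' o => detop_norm_one _ (hTBdet a) i' o) hC4B
  have normAb : ∀ b : Fin 2,
      (∑ a : Fin 2, 1 / ((Fintype.card OB' : ℝ) * (Fintype.card IB : ℝ)) *
        ∑ ib', ∑ ob, ∑ ib, ∑ ob', ∑ ia', ∑ oa, ∑ ia, ∑ oa',
          TA a b ia' oa ia oa' * W ia' oa ib' ob ia oa' ib ob') = 1 := by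
    intro b
    rw [← Finset.mul_sum]
    have push : ∑ a : Fin 2, ∑ ib', ∑ ob, ∑ ib, ∑ ob', ∑ ia', ∑ oa, ∑ ia, ∑ oa',
          TA a b ia' oa ia oa' * W ia' oa ib' ob ia oa' ib ob'
        = ∑ ib', ∑ ob, ∑ ib, ∑ ob', ∑ ia', ∑ oa, ∑ ia, ∑ oa',
            (∑ a : Fin 2, TA a b ia' oa ia oa') * W ia' oa ib' ob ia oa' ib ob' := by
      calc ∑ a : Fin 2, ∑ ib', ∑ ob, ∑ ib, ∑ ob', ∑ ia', ∑ oa, ∑ ia, ∑ oa',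
            TA a b ia' oa ia oa' * W ia' oa ib' ob ia oa' ib ob'
          = ∑ ib', ∑ ob, ∑ ib, ∑ ob', ∑ a : Fin 2, ∑ ia', ∑ oa, ∑ ia, ∑ oa',
              TA a b ia' oa ia oa' * W ia' oa ib' ob ia oa' ib ob' :=
            swap1_4 fun a ib' ob ib ob' => ∑ ia', ∑ oa, ∑ ia, ∑ oa',
              TA a b ia' oa ia oa' * W ia' oa ib' ob ia oa' ib ob'
        _ = ∑ ib', ∑ ob, ∑ ib, ∑ ob', ∑ ia', ∑ oa, ∑ ia, ∑ oa',
              (∑ a : Fin 2, TA a b ia' oa ia oa') * W ia' oa ib' ob ia oa' ib ob' := by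
            refine Finset.sum_congr rfl fun ib' _ => Finset.sum_congr rfl fun ob _ =>
              Finset.sum_congr rfl fun ib _ => Finset.sum_congr rfl fun ob' _ => ?_
            calc ∑ a : Fin 2, ∑ ia', ∑ oa, ∑ ia, ∑ oa',
                  TA a b ia' oa ia oa' * W ia' oa ib' ob ia oa' ib ob'
                = ∑ ia', ∑ oa, ∑ ia, ∑ oa', ∑ a : Fin 2,
                    TA a b ia' oa ia oa' * W ia' oa ib' ob ia oa' ib ob' :=
                  swap1_4 fun a ia' oa ia oa' =>
                    TA a b ia' oa ia oa' * W ia' oa ib' ob ia oa' ib ob'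
              _ = ∑ ia', ∑ oa, ∑ ia, ∑ oa', (∑ a : Fin 2, TA a b ia' oa ia oa') *
                    W ia' oa ib' ob ia oa' ib ob' :=
                  Finset.sum_congr rfl fun _ _ => Finset.sum_congr rfl fun _ _ =>
                    Finset.sum_congr rfl fun _ _ => Finset.sum_congr rfl fun _ _ =>
                      (Finset.sum_mul _ _ _).symm
    rw [push]
    exact normA W (fun i' o i o' => ∑ a : Fin 2, TA a b i' o i o')
      (fun ia' oa ia oa' => ∑ ib', ∑ ob, ∑ ib, ∑ ob', W ia' oa ib' ob ia oa' ib ob')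
      (fun _ _ _ _ => rfl)
      (fun i' o o₂ i => detop_const_o _ (hTAdet b) i' o o₂ i)
      (fun i' o => detop_norm_one _ (hTAdet b) i' o)
      (fun ia' oa ia oa' oa'₂ => hHB1 ia' oa ia oa' oa'₂)
      (fun ia' ia ia₂ oa' => hHB2 ia' ia ia₂ oa') htotB
  have B2 : (∑ a : Fin 2, ∑ b : Fin 2, corr TA TB (rrOB' W) a b b a) ≤ 2 := by
    calc ∑ a : Fin 2, ∑ b : Fin 2, corr TA TB (rrOB' W) a b b a
        ≤ ∑ a : Fin 2, ∑ b : Fin 2,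
            (1 / ((Fintype.card OB' : ℝ) * (Fintype.card IB : ℝ)) *
              ∑ ib', ∑ ob, ∑ ib, ∑ ob', ∑ ia', ∑ oa, ∑ ia, ∑ oa',
                TA a b ia' oa ia oa' * W ia' oa ib' ob ia oa' ib ob') := by
          refine Finset.sum_le_sum fun a _ => Finset.sum_le_sum fun b _ => ?_
          refine le_trans (Finset.single_le_sum
            (f := fun b' => corr TA TB (rrOB' W) a b' b a)
            (fun b' _ => corr_nonneg TA TB _ hTAnn hTBnn hU2nn a b' b a)
            (Finset.mem_univ b)) ?_
          exact le_of_eq (evalB a b)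
      _ = ∑ b : Fin 2, ∑ a : Fin 2,
            (1 / ((Fintype.card OB' : ℝ) * (Fintype.card IB : ℝ)) *
              ∑ ib', ∑ ob, ∑ ib, ∑ ob', ∑ ia', ∑ oa, ∑ ia, ∑ oa',
                TA a b ia' oa ia oa' * W ia' oa ib' ob ia oa' ib ob') :=
          Finset.sum_comm
      _ = ∑ b : Fin 2, (1:ℝ) := Finset.sum_congr rfl fun b _ => normAb b
      _ = 2 := by simp
  -- pointwise decomposition of W
  have hC3pt : ∀ ia' oa ib' ob ia oa' ib ob', W ia' oa ib' ob ia oa' ib ob'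
      = rrOA' W ia' oa ib' ob ia oa' ib ob' + rrOB' W ia' oa ib' ob ia oa' ib ob'
        - rrOA' (rrOB' W) ia' oa ib' ob ia oa' ib ob' := by
    intro ia' oa ib' ob ia oa' ib ob'
    have h := congrFun (congrFun (congrFun (congrFun (congrFun (congrFun (congrFun
      (congrFun hC3f ia') oa) ib') ob) ia) oa') ib) ob'
    simpa using h
  have hkey1 : ∀ ia' oa ib' ob ia oa' ib ob', W ia' oa ib' ob ia oa' ib ob'
      ≤ rrOA' W ia' oa ib' ob ia oa' ib ob' +
        (1 - 1 / (Fintype.card OA' : ℝ)) * rrOB' W ia' oa ib' ob ia oa' ib ob' := by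
    intro ia' oa ib' ob ia oa' ib ob'
    have h3 := hC3pt ia' oa ib' ob ia oa' ib ob'
    have hb : rrOB' W ia' oa ib' ob ia oa' ib ob' / (Fintype.card OA' : ℝ)
        ≤ rrOA' (rrOB' W) ia' oa ib' ob ia oa' ib ob' := by
      have e : rrOA' (rrOB' W) ia' oa ib' ob ia oa' ib ob'
          = (∑ j, rrOB' W ia' oa ib' ob ia j ib ob') / (Fintype.card OA' : ℝ) := rfl
      rw [e]
      gcongr
      exact Finset.single_le_sum (f := fun j => rrOB' W ia' oa ib' ob ia j ib ob')
        (fun j _ => hU2nn ia' oa ib' ob ia j ib ob') (Finset.mem_univ oa')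
    have hring : (1 - 1 / (Fintype.card OA' : ℝ)) * rrOB' W ia' oa ib' ob ia oa' ib ob'
        = rrOB' W ia' oa ib' ob ia oa' ib ob'
          - rrOB' W ia' oa ib' ob ia oa' ib ob' / (Fintype.card OA' : ℝ) := by
      ring
    linarith
  have hkey2 : ∀ ia' oa ib' ob ia oa' ib ob', W ia' oa ib' ob ia oa' ib ob'
      ≤ (1 - 1 / (Fintype.card OB' : ℝ)) * rrOA' W ia' oa ib' ob ia oa' ib ob' +
        rrOB' W ia' oa ib' ob ia oa' ib ob' := by
    intro ia' oa ib' ob ia oa' ib ob'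
    have h3 := hC3pt ia' oa ib' ob ia oa' ib ob'
    have hb : rrOA' W ia' oa ib' ob ia oa' ib ob' / (Fintype.card OB' : ℝ)
        ≤ rrOA' (rrOB' W) ia' oa ib' ob ia oa' ib ob' := by
      have e : rrOA' (rrOB' W) ia' oa ib' ob ia oa' ib ob'
          = (∑ j, (∑ k, W ia' oa ib' ob ia j ib k) / (Fintype.card OB' : ℝ)) /
              (Fintype.card OA' : ℝ) := rfl
      have e2 : rrOA' W ia' oa ib' ob ia oa' ib ob'
          = (∑ j, W ia' oa ib' ob ia j ib ob') / (Fintype.card OA' : ℝ) := rfl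
      rw [e, e2, ← Finset.sum_div, div_div, div_div,
        mul_comm (Fintype.card OB' : ℝ) (Fintype.card OA' : ℝ)]
      refine (div_le_div_iff_of_pos_right (mul_pos hcA'0 hcB'0)).mpr ?_
      exact Finset.sum_le_sum fun j _ => Finset.single_le_sum
        (f := fun k => W ia' oa ib' ob ia j ib k)
        (fun k _ => hWnn ia' oa ib' ob ia j ib k) (Finset.mem_univ ob')
    have hring : (1 - 1 / (Fintype.card OB' : ℝ)) * rrOA' W ia' oa ib' ob ia oa' ib ob'
        = rrOA' W ia' oa ib' ob ia oa' ib ob'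
          - rrOA' W ia' oa ib' ob ia oa' ib ob' / (Fintype.card OB' : ℝ) := by
      ring
    linarith
  -- simplify the game sum
  have hgame : (∑ a : Fin 2, ∑ b : Fin 2, ∑ x : Fin 2, ∑ y : Fin 2,
        (if a = y then (1:ℝ) else 0) * (if b = x then (1:ℝ) else 0) *
          corr TA TB W a b x y)
      = ∑ a : Fin 2, ∑ b : Fin 2, corr TA TB W a b b a := by
    refine Finset.sum_congr rfl fun a _ => Finset.sum_congr rfl fun b _ => ?_
    simp [ite_mul, mul_ite, Finset.sum_ite_eq, Finset.sum_ite_eq']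
  rw [hgame]
  rcases le_total (Fintype.card OA') (Fintype.card OB') with hmin | hmin
  · have hminc : (min ((Fintype.card OA' : ℝ)) ((Fintype.card OB' : ℝ))) = (Fintype.card OA' : ℝ) :=
      min_eq_left (by exact_mod_cast hmin)
    rw [hminc]
    have hsum : ∑ a : Fin 2, ∑ b : Fin 2, corr TA TB W a b b a
        ≤ (∑ a : Fin 2, ∑ b : Fin 2, corr TA TB (rrOA' W) a b b a) +
          (1 - 1 / (Fintype.card OA' : ℝ)) *
            (∑ a : Fin 2, ∑ b : Fin 2, corr TA TB (rrOB' W) a b b a) := by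
      calc ∑ a : Fin 2, ∑ b : Fin 2, corr TA TB W a b b a
          ≤ ∑ a : Fin 2, ∑ b : Fin 2, (corr TA TB (rrOA' W) a b b a +
              (1 - 1 / (Fintype.card OA' : ℝ)) * corr TA TB (rrOB' W) a b b a) :=
            Finset.sum_le_sum fun a _ => Finset.sum_le_sum fun b _ =>
              corr_mono_lin TA TB W (rrOA' W) (rrOB' W) _ hTAnn hTBnn hkey1 a b b a
        _ = _ := by
            simp only [Finset.sum_add_distrib, ← Finset.mul_sum]
    have hc : (0:ℝ) ≤ 1 - 1 / (Fintype.card OA' : ℝ) := by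
      have : 1 / (Fintype.card OA' : ℝ) ≤ 1 := by
        rw [div_le_one hcA'0]; exact hcA'1
      linarith
    have hB2' := mul_le_mul_of_nonneg_left B2 hc
    have e2 : (1:ℝ)/4 * (2 + (1 - 1 / (Fintype.card OA' : ℝ)) * 2)
        = 1 - 1 / (2 * (Fintype.card OA' : ℝ)) := by
      field_simp
      ring
    linarith [hsum, B1, hB2', e2]
  · have hminc : (min ((Fintype.card OA' : ℝ)) ((Fintype.card OB' : ℝ))) = (Fintype.card OB' : ℝ) :=
      min_eq_right (by exact_mod_cast hmin)
    rw [hminc]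
    have hsum : ∑ a : Fin 2, ∑ b : Fin 2, corr TA TB W a b b a
        ≤ (1 - 1 / (Fintype.card OB' : ℝ)) *
            (∑ a : Fin 2, ∑ b : Fin 2, corr TA TB (rrOA' W) a b b a) +
          (∑ a : Fin 2, ∑ b : Fin 2, corr TA TB (rrOB' W) a b b a) := by
      calc ∑ a : Fin 2, ∑ b : Fin 2, corr TA TB W a b b a
          ≤ ∑ a : Fin 2, ∑ b : Fin 2, (corr TA TB (rrOB' W) a b b a +
              (1 - 1 / (Fintype.card OB' : ℝ)) * corr TA TB (rrOA' W) a b b a) := by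
            refine Finset.sum_le_sum fun a _ => Finset.sum_le_sum fun b _ => ?_
            have := corr_mono_lin TA TB W (rrOB' W) (rrOA' W)
              (1 - 1 / (Fintype.card OB' : ℝ)) hTAnn hTBnn
              (fun ia' oa ib' ob ia oa' ib ob' => by
                have := hkey2 ia' oa ib' ob ia oa' ib ob'
                linarith) a b b a
            linarith
        _ = _ := by
            simp only [Finset.sum_add_distrib, ← Finset.mul_sum]
            ring
    have hc : (0:ℝ) ≤ 1 - 1 / (Fintype.card OB' : ℝ) := by
      have : 1 / (Fintype.card OB' : ℝ) ≤ 1 := by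
        rw [div_le_one hcB'0]; exact hcB'1
      linarith
    have hB1' := mul_le_mul_of_nonneg_left B1 hc
    have e2 : (1:ℝ)/4 * ((1 - 1 / (Fintype.card OB' : ℝ)) * 2 + 2)
        = 1 - 1 / (2 * (Fintype.card OB' : ℝ)) := by
      field_simp
      ring
    linarith [hsum, B2, hB1', e2]

end Boxworld

end
end

section
/- There do not exist finite nonempty wire index sets, a boxworld process W, and sets of probabilistic local operations T^{A|X} on Alice's wires and T^{B|Y} on Bob's wires with classical sets A = B = X = Y = {0,1}, such that ((T^{A|X} ⊗ T^{B|Y}) * W)(a, b | x, y) = δ_{a,y}·δ_{b,x} for all a, b, x, y. That is, perfect two-way signaling correlations cannot be generated by any boxworld process of any finite dimension. -/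
open Finset
open scoped Classical

noncomputable section

namespace Boxworld

section NoGoHelpers

lemma sum4_prod {α β γ δ : Type} [Fintype α] [Fintype β] [Fintype γ] [Fintype δ]
    (F : α → β → γ → δ → ℝ) :
    (∑ q : α × β × γ × δ, F q.1 q.2.1 q.2.2.1 q.2.2.2) = ∑ a, ∑ b, ∑ c, ∑ d, F a b c d := by
  simp [Fintype.sum_prod_type]

lemma sum2_prod {α β : Type} [Fintype α] [Fintype β] (F : α → β → ℝ) :
    (∑ q : α × β, F q.1 q.2) = ∑ a, ∑ b, F a b := by
  simp [Fintype.sum_prod_type]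


lemma sum3_prod {α β γ : Type} [Fintype α] [Fintype β] [Fintype γ] (F : α → β → γ → ℝ) :
    (∑ q : α × β × γ, F q.1 q.2.1 q.2.2) = ∑ a, ∑ b, ∑ c, F a b c := by
  simp [Fintype.sum_prod_type]

lemma sum31 {α β γ κ : Type} [Fintype α] [Fintype β] [Fintype γ] [Fintype κ]
    (F : α → β → γ → κ → ℝ) :
    (∑ a, ∑ b, ∑ c, ∑ k, F a b c k) = ∑ k, ∑ a, ∑ b, ∑ c, F a b c k := by
  rw [← sum3_prod (fun a b c => ∑ k, F a b c k)]
  rw [Finset.sum_congr rfl (fun k _ => (sum3_prod (fun a b c => F a b c k)).symm)]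
  rw [Finset.sum_comm]

lemma sum14 {ι α β γ δ : Type} [Fintype ι] [Fintype α] [Fintype β] [Fintype γ] [Fintype δ]
    (F : ι → α → β → γ → δ → ℝ) :
    (∑ i, ∑ a, ∑ b, ∑ c, ∑ d, F i a b c d) = ∑ a, ∑ b, ∑ c, ∑ d, ∑ i, F i a b c d := by
  rw [← sum4_prod (fun a b c d => ∑ i, F i a b c d)]
  rw [Finset.sum_congr rfl (fun i _ => (sum4_prod (F i)).symm)]
  rw [Finset.sum_comm]

lemma sum24 {ι κ α β γ δ : Type} [Fintype ι] [Fintype κ] [Fintype α] [Fintype β] [Fintype γ] [Fintype δ]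
    (F : ι → κ → α → β → γ → δ → ℝ) :
    (∑ i, ∑ j, ∑ a, ∑ b, ∑ c, ∑ d, F i j a b c d)
      = ∑ a, ∑ b, ∑ c, ∑ d, ∑ i, ∑ j, F i j a b c d := by
  rw [← sum4_prod (fun a b c d => ∑ i, ∑ j, F i j a b c d)]
  rw [← sum2_prod (fun i j => ∑ a, ∑ b, ∑ c, ∑ d, F i j a b c d)]
  rw [Finset.sum_congr rfl (fun q _ => (sum4_prod (F q.1 q.2)).symm)]
  rw [Finset.sum_comm]
  refine Finset.sum_congr rfl fun q _ => ?_
  rw [← sum2_prod (fun i j => F i j q.1 q.2.1 q.2.2.1 q.2.2.2)]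


lemma sum22 {ι κ α β : Type} [Fintype ι] [Fintype κ] [Fintype α] [Fintype β]
    (F : ι → κ → α → β → ℝ) :
    (∑ i, ∑ j, ∑ a, ∑ b, F i j a b) = ∑ a, ∑ b, ∑ i, ∑ j, F i j a b := by
  rw [← sum2_prod (fun i j => ∑ a, ∑ b, F i j a b)]
  rw [← sum2_prod (fun a b => ∑ i, ∑ j, F i j a b)]
  rw [Finset.sum_congr rfl (fun q _ => (sum2_prod (F q.1 q.2)).symm)]
  rw [Finset.sum_comm]
  refine Finset.sum_congr rfl fun q _ => ?_
  rw [← sum2_prod (fun i j => F i j q.1 q.2)]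

lemma sum44 {α β γ δ α' β' γ' δ' : Type} [Fintype α] [Fintype β] [Fintype γ] [Fintype δ]
    [Fintype α'] [Fintype β'] [Fintype γ'] [Fintype δ']
    (F : α → β → γ → δ → α' → β' → γ' → δ' → ℝ) :
    (∑ a, ∑ b, ∑ c, ∑ d, ∑ a', ∑ b', ∑ c', ∑ d', F a b c d a' b' c' d')
      = ∑ a', ∑ b', ∑ c', ∑ d', ∑ a, ∑ b, ∑ c, ∑ d, F a b c d a' b' c' d' := by
  rw [← sum4_prod (fun a' b' c' d' => ∑ a, ∑ b, ∑ c, ∑ d, F a b c d a' b' c' d')]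
  rw [← sum4_prod (fun a b c d => ∑ a', ∑ b', ∑ c', ∑ d', F a b c d a' b' c' d')]
  rw [Finset.sum_congr rfl (fun q _ => (sum4_prod (F q.1 q.2.1 q.2.2.1 q.2.2.2)).symm)]
  rw [Finset.sum_comm]
  refine Finset.sum_congr rfl fun q _ => ?_
  rw [← sum4_prod (fun a b c d => F a b c d q.1 q.2.1 q.2.2.1 q.2.2.2)]

section RawDefs

variable {IA' OA IB' OB IA OA' IB OB' : Type}
variable [Fintype IA'] [Fintype OA] [Fintype IB'] [Fintype OB]
variable [Fintype IA] [Fintype OA'] [Fintype IB] [Fintype OB']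

/-- Contraction with Alice block outside, Bob block inside. -/
def raw (S : OpTen IA' OA IA OA') (T : OpTen IB' OB IB OB')
    (W : WTen IA' OA IB' OB IA OA' IB OB') : ℝ :=
  ∑ ia', ∑ oa, ∑ ia, ∑ oa', S ia' oa ia oa' *
    ∑ ib', ∑ ob, ∑ ib, ∑ ob', T ib' ob ib ob' * W ia' oa ib' ob ia oa' ib ob'

/-- Swap the two parties of a process tensor. -/
def swt (W : WTen IA' OA IB' OB IA OA' IB OB') : WTen IB' OB IA' OA IB OB' IA OA' :=
  fun ib' ob ia' oa ib ob' ia oa' => W ia' oa ib' ob ia oa' ib ob'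

lemma raw_swap (S : OpTen IA' OA IA OA') (T : OpTen IB' OB IB OB')
    (W : WTen IA' OA IB' OB IA OA' IB OB') :
    raw S T W = raw T S (swt W) := by
  unfold raw swt
  simp only [Finset.mul_sum]
  rw [sum44 (fun ia' oa ia oa' ib' ob ib ob' =>
    S ia' oa ia oa' * (T ib' ob ib ob' * W ia' oa ib' ob ia oa' ib ob'))]
  refine Finset.sum_congr rfl fun ib' _ => Finset.sum_congr rfl fun ob _ =>
    Finset.sum_congr rfl fun ib _ => Finset.sum_congr rfl fun ob' _ =>
    Finset.sum_congr rfl fun ia' _ => Finset.sum_congr rfl fun oa _ =>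
    Finset.sum_congr rfl fun ia _ => Finset.sum_congr rfl fun oa' _ => by ring

lemma corr_raw {A X B Y : Type} (TA : A → X → OpTen IA' OA IA OA')
    (TB : B → Y → OpTen IB' OB IB OB') (W : WTen IA' OA IB' OB IA OA' IB OB')
    (a : A) (b : B) (x : X) (y : Y) :
    corr TA TB W a b x y = raw (TA a x) (TB b y) W := by
  unfold corr raw
  simp only [Finset.mul_sum]
  rw [Finset.sum_congr rfl (fun ia' _ => Finset.sum_congr rfl (fun oa _ =>
    sum22 (fun ib' ob ia oa' => ∑ ib, ∑ ob',
      TA a x ia' oa ia oa' * TB b y ib' ob ib ob' * W ia' oa ib' ob ia oa' ib ob')))]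
  refine Finset.sum_congr rfl fun ia' _ => Finset.sum_congr rfl fun oa _ =>
    Finset.sum_congr rfl fun ia _ => Finset.sum_congr rfl fun oa' _ =>
    Finset.sum_congr rfl fun ib' _ => Finset.sum_congr rfl fun ob _ =>
    Finset.sum_congr rfl fun ib _ => Finset.sum_congr rfl fun ob' _ => by ring

end RawDefs

end NoGoHelpers
set_option linter.unusedSectionVars false

section NoGoHelpers2

lemma div_cancel_helper (a b c : ℝ) (hc : c ≠ 0) (h : a / c = b / c) : a = b := by
  have := congrArg (· * c) h; simpa [div_mul_cancel₀, hc] using this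

section DetOpFacts

variable {I' O I O' : Type}
variable [Fintype I'] [Fintype O] [Fintype I] [Fintype O']

lemma detop_oconst [Nonempty O'] (T : OpTen I' O I O')
    (h : rrOpO' T = rrOpO (rrOpO' T)) :
    ∀ i' o o₂ i, (∑ o', T i' o i o') = ∑ o', T i' o₂ i o' := by
  intro i' o o₂ i
  obtain ⟨o'0⟩ := (inferInstance : Nonempty O')
  have h1 := congrFun (congrFun (congrFun (congrFun h i') o) i) o'0
  have h2 := congrFun (congrFun (congrFun (congrFun h i') o₂) i) o'0
  simp only [rrOpO', rrOpO] at h1 h2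
  have hc : ((Fintype.card O' : ℝ)) ≠ 0 := by
    exact_mod_cast (Fintype.card_pos (α := O')).ne'
  exact div_cancel_helper _ _ _ hc (h1.trans h2.symm)

lemma detop_sum [Nonempty I'] [Nonempty O] [Nonempty I] [Nonempty O']
    (T : OpTen I' O I O') (hdet : IsDetOp T) :
    ∀ i' o, (∑ i, ∑ o', T i' o i o') = 1 := by
  obtain ⟨h1, h2, h3⟩ := hdet
  intro i' o
  obtain ⟨i0⟩ := (inferInstance : Nonempty I)
  obtain ⟨o'0⟩ := (inferInstance : Nonempty O')
  have hI' : ((Fintype.card I' : ℝ)) ≠ 0 := by exact_mod_cast (Fintype.card_pos (α := I')).ne'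
  have hO : ((Fintype.card O : ℝ)) ≠ 0 := by exact_mod_cast (Fintype.card_pos (α := O)).ne'
  have hI : ((Fintype.card I : ℝ)) ≠ 0 := by exact_mod_cast (Fintype.card_pos (α := I)).ne'
  have hO' : ((Fintype.card O' : ℝ)) ≠ 0 := by exact_mod_cast (Fintype.card_pos (α := O')).ne'
  have e := congrFun (congrFun (congrFun (congrFun h2 i') o) i0) o'0
  simp only [rrOpI, rrOpI', rrOpO, rrOpO'] at e
  simp only [← Finset.sum_div, div_div] at e
  rw [Finset.sum_congr rfl (fun i2' _ => Finset.sum_comm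
      (f := fun i2 k => ∑ j, T i2' k i2 j))] at e
  rw [show (∑ i2' : I', ∑ k : O, ∑ i2 : I, ∑ j : O', T i2' k i2 j) = totOp T from rfl, h1] at e
  have hval : ((Fintype.card I' : ℝ) * (Fintype.card O : ℝ))
      / ((Fintype.card O' : ℝ) * (Fintype.card O : ℝ) * (Fintype.card I : ℝ) * (Fintype.card I' : ℝ))
      = 1 / ((Fintype.card O' : ℝ) * (Fintype.card I : ℝ)) := by
    field_simp
  rw [hval] at e
  exact div_cancel_helper _ _ _ (by positivity) e

end DetOpFacts

section WFacts

variable {IA' OA IB' OB IA OA' IB OB' : Type}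
variable [Fintype IA'] [Fintype OA] [Fintype IB'] [Fintype OB]
variable [Fintype IA] [Fintype OA'] [Fintype IB] [Fintype OB']

lemma WfactA [Nonempty OA] (W : WTen IA' OA IB' OB IA OA' IB OB')
    (h6 : rrOA W = rrIA (rrOA W)) :
    ∀ ia' ib' ob ia₁ ia₂ oa' ib ob',
      (∑ oa, W ia' oa ib' ob ia₁ oa' ib ob') = ∑ oa, W ia' oa ib' ob ia₂ oa' ib ob' := by
  intro ia' ib' ob ia₁ ia₂ oa' ib ob'
  obtain ⟨oa0⟩ := (inferInstance : Nonempty OA)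
  have e1 := congrFun (congrFun (congrFun (congrFun (congrFun (congrFun (congrFun
      (congrFun h6 ia') oa0) ib') ob) ia₁) oa') ib) ob'
  have e2 := congrFun (congrFun (congrFun (congrFun (congrFun (congrFun (congrFun
      (congrFun h6 ia') oa0) ib') ob) ia₂) oa') ib) ob'
  simp only [rrOA, rrIA] at e1 e2
  have hc : ((Fintype.card OA : ℝ)) ≠ 0 := by exact_mod_cast (Fintype.card_pos (α := OA)).ne'
  exact div_cancel_helper _ _ _ hc (e1.trans e2.symm)

lemma EBconst [Nonempty IA'] [Nonempty OA] [Nonempty IA] [Nonempty OA']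
    (W : WTen IA' OA IB' OB IA OA' IB OB')
    (h3 : rrA W = rrOB' (rrA W))
    (hWA : ∀ ia' ib' ob ia₁ ia₂ oa' ib ob',
      (∑ oa, W ia' oa ib' ob ia₁ oa' ib ob') = ∑ oa, W ia' oa ib' ob ia₂ oa' ib ob')
    (ia0 : IA) :
    ∀ ib' ob ib ob'₁ ob'₂,
      (∑ ia', ∑ oa, ∑ oa', W ia' oa ib' ob ia0 oa' ib ob'₁)
        = ∑ ia', ∑ oa, ∑ oa', W ia' oa ib' ob ia0 oa' ib ob'₂ := by
  intro ib' ob ib ob'₁ ob'₂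
  obtain ⟨ia'0⟩ := (inferInstance : Nonempty IA')
  obtain ⟨oa0⟩ := (inferInstance : Nonempty OA)
  obtain ⟨oa'0⟩ := (inferInstance : Nonempty OA')
  have hinner : ∀ (ob' : OB') (ia' : IA') (ia : IA),
      (∑ oa, ∑ oa', W ia' oa ib' ob ia oa' ib ob')
        = ∑ oa, ∑ oa', W ia' oa ib' ob ia0 oa' ib ob' := by
    intro ob' ia' ia
    rw [Finset.sum_comm, Finset.sum_congr rfl (fun oa' _ => hWA ia' ib' ob ia ia0 oa' ib ob'),
      Finset.sum_comm]
  have key : ∀ ob' : OB',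
      (∑ ia', ∑ ia : IA, ∑ oa, ∑ oa', W ia' oa ib' ob ia oa' ib ob')
        = (Fintype.card IA : ℝ) * ∑ ia', ∑ oa, ∑ oa', W ia' oa ib' ob ia0 oa' ib ob' := by
    intro ob'
    rw [Finset.mul_sum]
    refine Finset.sum_congr rfl fun ia' _ => ?_
    rw [Finset.sum_congr rfl (fun ia _ => hinner ob' ia' ia), Finset.sum_const,
      nsmul_eq_mul, Finset.card_univ]
  have e1 := congrFun (congrFun (congrFun (congrFun (congrFun (congrFun (congrFun
      (congrFun h3 ia'0) oa0) ib') ob) ia0) oa'0) ib) ob'₁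
  have e2 := congrFun (congrFun (congrFun (congrFun (congrFun (congrFun (congrFun
      (congrFun h3 ia'0) oa0) ib') ob) ia0) oa'0) ib) ob'₂
  have erhs : rrOB' (rrA W) ia'0 oa0 ib' ob ia0 oa'0 ib ob'₁
      = rrOB' (rrA W) ia'0 oa0 ib' ob ia0 oa'0 ib ob'₂ := rfl
  have e : rrA W ia'0 oa0 ib' ob ia0 oa'0 ib ob'₁
      = rrA W ia'0 oa0 ib' ob ia0 oa'0 ib ob'₂ := by
    rw [e1, e2]; exact erhs
  simp only [rrA, rrIA', rrIA, rrOA, rrOA'] at e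
  simp only [← Finset.sum_div, div_div] at e
  have eq := div_cancel_helper _ _ _ (by positivity) e
  rw [key ob'₁, key ob'₂] at eq
  have hc : ((Fintype.card IA : ℝ)) ≠ 0 := by exact_mod_cast (Fintype.card_pos (α := IA)).ne'
  exact mul_left_cancel₀ hc eq

end WFacts

end NoGoHelpers2
section NoGoHelpers3

set_option linter.unusedSectionVars false

lemma collapse_abstract {I' O I O' : Type} [Fintype I'] [Fintype O] [Fintype I] [Fintype O']
    {A : Type} [Fintype A] (i0 : I) (o0 : O) (o'0 : O')
    (Ts : A → OpTen I' O I O')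
    (hconst : ∀ i' o o₂ i, (∑ o', ∑ a, Ts a i' o i o') = ∑ o', ∑ a, Ts a i' o₂ i o')
    (hsum : ∀ i' o, (∑ i, ∑ o', ∑ a, Ts a i' o i o') = 1)
    (g : I' → O → I → O' → ℝ)
    (hg1 : ∀ i' o i o'₁ o'₂, g i' o i o'₁ = g i' o i o'₂)
    (hg2 : ∀ i' i₁ i₂ o', (∑ o, g i' o i₁ o') = ∑ o, g i' o i₂ o') :
    (∑ a, ∑ i', ∑ o, ∑ i, ∑ o', Ts a i' o i o' * g i' o i o')
      = ∑ i', ∑ o, g i' o i0 o'0 := by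
  rw [sum14 (fun a i' o i o' => Ts a i' o i o' * g i' o i o')]
  have step1 : ∀ i' o i, (∑ o', ∑ a, Ts a i' o i o' * g i' o i o')
      = (∑ o', ∑ a, Ts a i' o0 i o') * g i' o i o'0 := by
    intro i' o i
    rw [Finset.sum_congr rfl (fun o' _ => by
      rw [← Finset.sum_mul, hg1 i' o i o' o'0] :
        ∀ o' ∈ Finset.univ, (∑ a, Ts a i' o i o' * g i' o i o')
          = (∑ a, Ts a i' o i o') * g i' o i o'0)]
    rw [← Finset.sum_mul, hconst i' o o0 i]
  rw [Finset.sum_congr rfl (fun i' _ => Finset.sum_congr rfl (fun o _ =>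
    Finset.sum_congr rfl (fun i _ => step1 i' o i)))]
  rw [Finset.sum_congr rfl (fun i' _ => Finset.sum_comm
    (f := fun o i => (∑ o', ∑ a, Ts a i' o0 i o') * g i' o i o'0))]
  refine Finset.sum_congr rfl fun i' _ => ?_
  have step2 : ∀ i, (∑ o, (∑ o', ∑ a, Ts a i' o0 i o') * g i' o i o'0)
      = (∑ o', ∑ a, Ts a i' o0 i o') * (∑ o, g i' o i0 o'0) := by
    intro i
    rw [← Finset.mul_sum, hg2 i' i i0 o'0]
  rw [Finset.sum_congr rfl (fun i _ => step2 i), ← Finset.sum_mul, hsum i' o0, one_mul]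

section CollapseRaw

variable {IA' OA IB' OB IA OA' IB OB' : Type}
variable [Fintype IA'] [Fintype OA] [Fintype IB'] [Fintype OB]
variable [Fintype IA] [Fintype OA'] [Fintype IB] [Fintype OB']

lemma collapse_raw [Nonempty OA] [Nonempty OA'] {A : Type} [Fintype A]
    (i0 : IA)
    (Ts : A → OpTen IA' OA IA OA')
    (hconst : ∀ i' o o₂ i, (∑ o', ∑ a, Ts a i' o i o') = ∑ o', ∑ a, Ts a i' o₂ i o')
    (hsum : ∀ i' o, (∑ i, ∑ o', ∑ a, Ts a i' o i o') = 1)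
    (T2 : OpTen IB' OB IB OB')
    (W' : WTen IA' OA IB' OB IA OA' IB OB')
    (hWA : ∀ ia' ib' ob ia₁ ia₂ oa' ib ob',
      (∑ oa, W' ia' oa ib' ob ia₁ oa' ib ob') = ∑ oa, W' ia' oa ib' ob ia₂ oa' ib ob') :
    (∑ a, raw (Ts a) T2 (rrOA' W'))
      = (Fintype.card OA' : ℝ)⁻¹ *
        ∑ ib', ∑ ob, ∑ ib, ∑ ob', T2 ib' ob ib ob' *
          ∑ ia', ∑ oa, ∑ oa', W' ia' oa ib' ob i0 oa' ib ob' := by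
  obtain ⟨o0⟩ := (inferInstance : Nonempty OA)
  obtain ⟨o'0⟩ := (inferInstance : Nonempty OA')
  have hrr : ∀ i' ib' ob i₁ i₂ o' ib ob',
      (∑ o, rrOA' W' i' o ib' ob i₁ o' ib ob') = ∑ o, rrOA' W' i' o ib' ob i₂ o' ib ob' := by
    intro i' ib' ob i₁ i₂ o' ib ob'
    simp only [rrOA']
    rw [← Finset.sum_div, ← Finset.sum_div, Finset.sum_comm, Finset.sum_comm
      (f := fun o j => W' i' o ib' ob i₂ j ib ob')]
    congr 1
    exact Finset.sum_congr rfl fun j _ => hWA i' ib' ob i₁ i₂ j ib ob'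
  have hg2 : ∀ i' i₁ i₂ o',
      (∑ o, ∑ ib', ∑ ob, ∑ ib, ∑ ob', T2 ib' ob ib ob' * rrOA' W' i' o ib' ob i₁ o' ib ob')
        = ∑ o, ∑ ib', ∑ ob, ∑ ib, ∑ ob', T2 ib' ob ib ob' * rrOA' W' i' o ib' ob i₂ o' ib ob' := by
    intro i' i₁ i₂ o'
    rw [sum14 (fun o ib' ob ib ob' => T2 ib' ob ib ob' * rrOA' W' i' o ib' ob i₁ o' ib ob'),
      sum14 (fun o ib' ob ib ob' => T2 ib' ob ib ob' * rrOA' W' i' o ib' ob i₂ o' ib ob')]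
    refine Finset.sum_congr rfl fun ib' _ => Finset.sum_congr rfl fun ob _ =>
      Finset.sum_congr rfl fun ib _ => Finset.sum_congr rfl fun ob' _ => ?_
    rw [← Finset.mul_sum, ← Finset.mul_sum, hrr i' ib' ob i₁ i₂ o' ib ob']
  have habs := collapse_abstract i0 o0 o'0 Ts hconst hsum
    (fun ia' oa ia oa' => ∑ ib', ∑ ob, ∑ ib, ∑ ob',
      T2 ib' ob ib ob' * rrOA' W' ia' oa ib' ob ia oa' ib ob')
    (fun i' o i o'₁ o'₂ => rfl) hg2
  rw [show (∑ a, raw (Ts a) T2 (rrOA' W')) = ∑ a, ∑ ia', ∑ oa, ∑ ia, ∑ oa',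
      Ts a ia' oa ia oa' * ∑ ib', ∑ ob, ∑ ib, ∑ ob',
        T2 ib' ob ib ob' * rrOA' W' ia' oa ib' ob ia oa' ib ob' from rfl, habs]
  rw [sum24 (fun ia' oa ib' ob ib ob' =>
      T2 ib' ob ib ob' * rrOA' W' ia' oa ib' ob i0 o'0 ib ob')]
  have hβ : ∀ ib' ob ib ob',
      (∑ ia', ∑ oa, T2 ib' ob ib ob' * rrOA' W' ia' oa ib' ob i0 o'0 ib ob')
        = (Fintype.card OA' : ℝ)⁻¹ *
          (T2 ib' ob ib ob' * ∑ ia', ∑ oa, ∑ oa', W' ia' oa ib' ob i0 oa' ib ob') := by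
    intro ib' ob ib ob'
    simp only [rrOA', ← Finset.mul_sum]
    simp only [← Finset.sum_div]
    rw [div_eq_mul_inv]; ring
  rw [Finset.sum_congr rfl (fun ib' _ => Finset.sum_congr rfl (fun ob _ =>
    Finset.sum_congr rfl (fun ib _ => Finset.sum_congr rfl (fun ob' _ => hβ ib' ob ib ob'))))]
  simp only [← Finset.mul_sum]

end CollapseRaw

end NoGoHelpers3
section NoGoHelpers4

set_option linter.unusedSectionVars false

variable {IA' OA IB' OB IA OA' IB OB' : Type}
variable [Fintype IA'] [Fintype OA] [Fintype IB'] [Fintype OB]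
variable [Fintype IA] [Fintype OA'] [Fintype IB] [Fintype OB']

lemma raw_decomp (S : OpTen IA' OA IA OA') (T : OpTen IB' OB IB OB')
    (X Y Z : WTen IA' OA IB' OB IA OA' IB OB') :
    raw S T (X + Y - Z) = raw S T X + raw S T Y - raw S T Z := by
  have expand : raw S T (X + Y - Z) = raw S T (fun ia' oa ib' ob ia oa' ib ob' =>
      X ia' oa ib' ob ia oa' ib ob' + Y ia' oa ib' ob ia oa' ib ob'
        - Z ia' oa ib' ob ia oa' ib ob') := rfl
  rw [expand]; unfold raw
  simp only [mul_add, mul_sub, Finset.sum_add_distrib, Finset.sum_sub_distrib]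

lemma raw_nonneg (S : OpTen IA' OA IA OA') (T : OpTen IB' OB IB OB')
    (W : WTen IA' OA IB' OB IA OA' IB OB')
    (hS : ∀ i' o i o', 0 ≤ S i' o i o') (hT : ∀ i' o i o', 0 ≤ T i' o i o')
    (hW : Nonneg8 W) : 0 ≤ raw S T W := by
  unfold raw
  refine Finset.sum_nonneg fun _ _ => Finset.sum_nonneg fun _ _ =>
    Finset.sum_nonneg fun _ _ => Finset.sum_nonneg fun _ _ =>
    mul_nonneg (hS _ _ _ _) (Finset.sum_nonneg fun _ _ => Finset.sum_nonneg fun _ _ =>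
      Finset.sum_nonneg fun _ _ => Finset.sum_nonneg fun _ _ =>
        mul_nonneg (hT _ _ _ _) (hW _ _ _ _ _ _ _ _))

lemma rrOA'_nonneg (W : WTen IA' OA IB' OB IA OA' IB OB') (hW : Nonneg8 W) :
    Nonneg8 (rrOA' W) := by
  intro ia' oa ib' ob ia oa' ib ob'
  exact div_nonneg (Finset.sum_nonneg fun _ _ => hW _ _ _ _ _ _ _ _) (by positivity)

lemma rrOB'_nonneg (W : WTen IA' OA IB' OB IA OA' IB OB') (hW : Nonneg8 W) :
    Nonneg8 (rrOB' W) := by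
  intro ia' oa ib' ob ia oa' ib ob'
  exact div_nonneg (Finset.sum_nonneg fun _ _ => hW _ _ _ _ _ _ _ _) (by positivity)

lemma raw_mono (S : OpTen IA' OA IA OA') (T : OpTen IB' OB IB OB')
    (W W2 : WTen IA' OA IB' OB IA OA' IB OB')
    (hS : ∀ i' o i o', 0 ≤ S i' o i o') (hT : ∀ i' o i o', 0 ≤ T i' o i o')
    (h : ∀ ia' oa ib' ob ia oa' ib ob',
      W ia' oa ib' ob ia oa' ib ob' ≤ W2 ia' oa ib' ob ia oa' ib ob') :
    raw S T W ≤ raw S T W2 := by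
  unfold raw
  refine Finset.sum_le_sum fun _ _ => Finset.sum_le_sum fun _ _ =>
    Finset.sum_le_sum fun _ _ => Finset.sum_le_sum fun _ _ =>
    mul_le_mul_of_nonneg_left ?_ (hS _ _ _ _)
  refine Finset.sum_le_sum fun _ _ => Finset.sum_le_sum fun _ _ =>
    Finset.sum_le_sum fun _ _ => Finset.sum_le_sum fun _ _ =>
    mul_le_mul_of_nonneg_left (h _ _ _ _ _ _ _ _) (hT _ _ _ _)

lemma raw_bound [Nonempty OA'] [Nonempty OB']
    (S : OpTen IA' OA IA OA') (T : OpTen IB' OB IB OB')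
    (W : WTen IA' OA IB' OB IA OA' IB OB')
    (hS : ∀ i' o i o', 0 ≤ S i' o i o') (hT : ∀ i' o i o', 0 ≤ T i' o i o')
    (hW : Nonneg8 W) :
    raw S T W ≤ ((Fintype.card OA' : ℝ) * (Fintype.card OB' : ℝ)) *
      raw S T (rrOA' (rrOB' W)) := by
  have hpt : rrOA' (rrOB' W) = fun ia' oa ib' ob ia oa' ib ob' =>
      (∑ j, ∑ k, W ia' oa ib' ob ia j ib k)
        / ((Fintype.card OA' : ℝ) * (Fintype.card OB' : ℝ)) := by
    funext ia' oa ib' ob ia oa' ib ob'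
    simp only [rrOA', rrOB']
    rw [← Finset.sum_div, div_div, mul_comm]
  have hdiv : raw S T (rrOA' (rrOB' W))
      = raw S T (fun ia' oa ib' ob ia oa' ib ob' => ∑ j, ∑ k, W ia' oa ib' ob ia j ib k)
        / ((Fintype.card OA' : ℝ) * (Fintype.card OB' : ℝ)) := by
    rw [hpt]; unfold raw
    simp only [← mul_div_assoc, ← Finset.sum_div]
  rw [hdiv, mul_div_cancel₀]
  swap
  · positivity
  refine raw_mono S T _ _ hS hT ?_
  intro ia' oa ib' ob ia oa' ib ob'
  calc W ia' oa ib' ob ia oa' ib ob'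
      ≤ ∑ k, W ia' oa ib' ob ia oa' ib k :=
        Finset.single_le_sum (f := fun k => W ia' oa ib' ob ia oa' ib k)
          (fun _ _ => hW _ _ _ _ _ _ _ _) (Finset.mem_univ ob')
    _ ≤ ∑ j, ∑ k, W ia' oa ib' ob ia j ib k :=
        Finset.single_le_sum (f := fun j => ∑ k, W ia' oa ib' ob ia j ib k)
          (fun _ _ => Finset.sum_nonneg fun _ _ => hW _ _ _ _ _ _ _ _) (Finset.mem_univ oa')

lemma swt_rrOB' (W : WTen IA' OA IB' OB IA OA' IB OB') :
    swt (rrOB' W) = rrOA' (swt W) := rfl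

lemma swt_rrOA' (W : WTen IA' OA IB' OB IA OA' IB OB') :
    swt (rrOA' W) = rrOB' (swt W) := rfl

lemma rrO'_comm (W : WTen IA' OA IB' OB IA OA' IB OB') :
    rrOA' (rrOB' W) = rrOB' (rrOA' W) := by
  funext ia' oa ib' ob ia oa' ib ob'
  simp only [rrOA', rrOB']
  rw [← Finset.sum_div, ← Finset.sum_div, div_div, div_div, Finset.sum_comm, mul_comm]

lemma WfactA_rrOB' (W : WTen IA' OA IB' OB IA OA' IB OB')
    (hWA : ∀ ia' ib' ob ia₁ ia₂ oa' ib ob',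
      (∑ oa, W ia' oa ib' ob ia₁ oa' ib ob') = ∑ oa, W ia' oa ib' ob ia₂ oa' ib ob') :
    ∀ ia' ib' ob ia₁ ia₂ oa' ib ob',
      (∑ oa, rrOB' W ia' oa ib' ob ia₁ oa' ib ob')
        = ∑ oa, rrOB' W ia' oa ib' ob ia₂ oa' ib ob' := by
  intro ia' ib' ob ia₁ ia₂ oa' ib ob'
  simp only [rrOB']
  rw [← Finset.sum_div, ← Finset.sum_div, Finset.sum_comm, Finset.sum_comm
    (f := fun oa k => W ia' oa ib' ob ia₂ oa' ib k)]
  congr 1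
  exact Finset.sum_congr rfl fun k _ => hWA ia' ib' ob ia₁ ia₂ oa' ib k


lemma EB_rrOB'_eq [Nonempty OB'] (W : WTen IA' OA IB' OB IA OA' IB OB') (ia0 : IA)
    (hEB : ∀ ib' ob ib ob'₁ ob'₂,
      (∑ ia', ∑ oa, ∑ oa', W ia' oa ib' ob ia0 oa' ib ob'₁)
        = ∑ ia', ∑ oa, ∑ oa', W ia' oa ib' ob ia0 oa' ib ob'₂) :
    ∀ ib' ob ib ob',
      (∑ ia', ∑ oa, ∑ oa', rrOB' W ia' oa ib' ob ia0 oa' ib ob')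
        = ∑ ia', ∑ oa, ∑ oa', W ia' oa ib' ob ia0 oa' ib ob' := by
  intro ib' ob ib ob'
  simp only [rrOB']
  simp only [← Finset.sum_div]
  rw [sum31 (fun ia' oa oa' k => W ia' oa ib' ob ia0 oa' ib k)]
  rw [Finset.sum_congr rfl (fun k _ => hEB ib' ob ib k ob')]
  rw [Finset.sum_const, nsmul_eq_mul, Finset.card_univ]
  rw [mul_div_cancel_left₀ _ (by exact_mod_cast (Fintype.card_pos (α := OB')).ne' : ((Fintype.card OB' : ℝ)) ≠ 0)]

end NoGoHelpers4
set_option maxHeartbeats 1000000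
theorem statement_12 :
    ¬ ∃ (n1 n2 n3 n4 n5 n6 n7 n8 : ℕ)
        (W : WTen (Fin (n1+1)) (Fin (n2+1)) (Fin (n3+1)) (Fin (n4+1)) (Fin (n5+1)) (Fin (n6+1)) (Fin (n7+1)) (Fin (n8+1)))
        (TA : Fin 2 → Fin 2 → OpTen (Fin (n1+1)) (Fin (n2+1)) (Fin (n5+1)) (Fin (n6+1)))
        (TB : Fin 2 → Fin 2 → OpTen (Fin (n3+1)) (Fin (n4+1)) (Fin (n7+1)) (Fin (n8+1))),
        IsBoxworldProcess W ∧ IsLocalOps TA ∧ IsLocalOps TB ∧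
        ∀ a b x y : Fin 2, corr TA TB W a b x y =
          (if a = y then (1 : ℝ) else 0) * (if b = x then (1 : ℝ) else 0) := by
  rintro ⟨n1, n2, n3, n4, n5, n6, n7, n8, W, TA, TB,
    ⟨hW1, hW2, hW3, hW4, hW5, hW6, hW7⟩, ⟨hTA1, hTA2⟩, ⟨hTB1, hTB2⟩, hcorr⟩
  -- correlations in `raw` form
  have hp : ∀ a b x y : Fin 2, raw (TA a x) (TB b y) W
      = (if a = y then (1:ℝ) else 0) * (if b = x then (1:ℝ) else 0) := by
    intro a b x y; rw [← corr_raw]; exact hcorr a b x y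
  -- process decomposition
  have hdec : ∀ a b x y : Fin 2, raw (TA a x) (TB b y) W
      = raw (TA a x) (TB b y) (rrOA' W) + raw (TA a x) (TB b y) (rrOB' W)
        - raw (TA a x) (TB b y) (rrOA' (rrOB' W)) := by
    intro a b x y
    calc raw (TA a x) (TB b y) W
        = raw (TA a x) (TB b y) (rrOA' W + rrOB' W - rrOA' (rrOB' W)) := by rw [← hW5]
      _ = _ := raw_decomp _ _ _ _ _
  -- facts about W
  have hWA := WfactA W hW6
  have hWBsw : rrOA (swt W) = rrIA (rrOA (swt W)) := congrArg swt hW7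
  have hWB := WfactA (swt W) hWBsw
  have h3sw : rrA (swt W) = rrOB' (rrA (swt W)) := congrArg swt hW4
  have hEB := EBconst W hW3 hWA (0 : Fin (n5+1))
  have hDA := EBconst (swt W) h3sw hWB (0 : Fin (n7+1))
  -- deterministic-operation facts
  have hconstA : ∀ x i' o o₂ i, (∑ o', ∑ a, TA a x i' o i o') = ∑ o', ∑ a, TA a x i' o₂ i o' :=
    fun x => detop_oconst _ (hTA2 x).2.2
  have hsumA : ∀ x i' o, (∑ i, ∑ o', ∑ a, TA a x i' o i o') = 1 :=
    fun x => detop_sum _ (hTA2 x)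
  have hconstB : ∀ y i' o o₂ i, (∑ o', ∑ b, TB b y i' o i o') = ∑ o', ∑ b, TB b y i' o₂ i o' :=
    fun y => detop_oconst _ (hTB2 y).2.2
  have hsumB : ∀ y i' o, (∑ i, ∑ o', ∑ b, TB b y i' o i o') = 1 :=
    fun y => detop_sum _ (hTB2 y)
  -- A-side collapses
  have hSau_indep : ∀ (b x x' y : Fin 2),
      (∑ a, raw (TA a x) (TB b y) (rrOA' W)) = ∑ a, raw (TA a x') (TB b y) (rrOA' W) := by
    intro b x x' y
    rw [collapse_raw 0 (fun a => TA a x) (hconstA x) (hsumA x) (TB b y) W hWA,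
      collapse_raw 0 (fun a => TA a x') (hconstA x') (hsumA x') (TB b y) W hWA]
  have hSauw : ∀ (b x y : Fin 2),
      (∑ a, raw (TA a x) (TB b y) (rrOA' (rrOB' W))) = ∑ a, raw (TA a x) (TB b y) (rrOA' W) := by
    intro b x y
    rw [collapse_raw 0 (fun a => TA a x) (hconstA x) (hsumA x) (TB b y) (rrOB' W)
        (WfactA_rrOB' W hWA),
      collapse_raw 0 (fun a => TA a x) (hconstA x) (hsumA x) (TB b y) W hWA]
    have hin : ∀ (ib' : Fin (n3+1)) (ob : Fin (n4+1)) (ib : Fin (n7+1)) (ob' : Fin (n8+1)),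
        (∑ ia', ∑ oa, ∑ oa', rrOB' W ia' oa ib' ob 0 oa' ib ob')
          = ∑ ia', ∑ oa, ∑ oa', W ia' oa ib' ob 0 oa' ib ob' := EB_rrOB'_eq W 0 hEB
    rw [Finset.sum_congr rfl fun ib' _ => Finset.sum_congr rfl fun ob _ =>
      Finset.sum_congr rfl fun ib _ => Finset.sum_congr rfl fun ob' _ => by
        rw [hin ib' ob ib ob']]
  -- Σ_a v = δ_{bx}
  have hSap : ∀ (b x y : Fin 2), (∑ a, raw (TA a x) (TB b y) W) = if b = x then (1:ℝ) else 0 := by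
    intro b x y
    rw [Finset.sum_congr rfl fun a _ => hp a b x y]
    fin_cases y <;> simp [Fin.sum_univ_two]
  have hSav : ∀ (b x y : Fin 2),
      (∑ a, raw (TA a x) (TB b y) (rrOB' W)) = if b = x then (1:ℝ) else 0 := by
    intro b x y
    have h1 : ∀ a : Fin 2, raw (TA a x) (TB b y) (rrOB' W)
        = raw (TA a x) (TB b y) W - raw (TA a x) (TB b y) (rrOA' W)
          + raw (TA a x) (TB b y) (rrOA' (rrOB' W)) := by
      intro a; have := hdec a b x y; linarith
    rw [Finset.sum_congr rfl fun a _ => h1 a]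
    simp only [Finset.sum_add_distrib, Finset.sum_sub_distrib]
    rw [hSauw b x y, hSap b x y]
    ring
  -- B-side collapses (via swapping)
  have convV : ∀ (a x y : Fin 2), (∑ b, raw (TA a x) (TB b y) (rrOB' W))
      = ∑ b, raw (TB b y) (TA a x) (rrOA' (swt W)) := by
    intro a x y
    refine Finset.sum_congr rfl fun b _ => ?_
    rw [raw_swap, swt_rrOB']
  have convW : ∀ (a x y : Fin 2), (∑ b, raw (TA a x) (TB b y) (rrOA' (rrOB' W)))
      = ∑ b, raw (TB b y) (TA a x) (rrOA' (rrOB' (swt W))) := by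
    intro a x y
    refine Finset.sum_congr rfl fun b _ => ?_
    rw [rrO'_comm W, raw_swap, swt_rrOB', swt_rrOA']
  have hSbv_indep : ∀ (a x y y' : Fin 2),
      (∑ b, raw (TA a x) (TB b y) (rrOB' W)) = ∑ b, raw (TA a x) (TB b y') (rrOB' W) := by
    intro a x y y'
    rw [convV a x y, convV a x y',
      collapse_raw 0 (fun b => TB b y) (hconstB y) (hsumB y) (TA a x) (swt W) hWB,
      collapse_raw 0 (fun b => TB b y') (hconstB y') (hsumB y') (TA a x) (swt W) hWB]
  have hSbvw : ∀ (a x y : Fin 2),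
      (∑ b, raw (TA a x) (TB b y) (rrOA' (rrOB' W)))
        = ∑ b, raw (TA a x) (TB b y) (rrOB' W) := by
    intro a x y
    rw [convW a x y, convV a x y,
      collapse_raw 0 (fun b => TB b y) (hconstB y) (hsumB y) (TA a x) (rrOB' (swt W))
        (WfactA_rrOB' (swt W) hWB),
      collapse_raw 0 (fun b => TB b y) (hconstB y) (hsumB y) (TA a x) (swt W) hWB]
    have hin : ∀ (ia' : Fin (n1+1)) (oa : Fin (n2+1)) (ia : Fin (n5+1)) (oa' : Fin (n6+1)),
        (∑ ib', ∑ ob, ∑ ob', rrOB' (swt W) ib' ob ia' oa 0 ob' ia oa')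
          = ∑ ib', ∑ ob, ∑ ob', swt W ib' ob ia' oa 0 ob' ia oa' := EB_rrOB'_eq (swt W) 0 hDA
    rw [Finset.sum_congr rfl fun ia' _ => Finset.sum_congr rfl fun oa _ =>
      Finset.sum_congr rfl fun ia _ => Finset.sum_congr rfl fun oa' _ => by
        rw [hin ia' oa ia oa']]
  -- Σ_b u = δ_{ay}
  have hSbp : ∀ (a x y : Fin 2), (∑ b, raw (TA a x) (TB b y) W) = if a = y then (1:ℝ) else 0 := by
    intro a x y
    rw [Finset.sum_congr rfl fun b _ => hp a b x y]
    fin_cases x <;> simp [Fin.sum_univ_two]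
  have hSbu : ∀ (a x y : Fin 2),
      (∑ b, raw (TA a x) (TB b y) (rrOA' W)) = if a = y then (1:ℝ) else 0 := by
    intro a x y
    have h1 : ∀ b : Fin 2, raw (TA a x) (TB b y) (rrOA' W)
        = raw (TA a x) (TB b y) W - raw (TA a x) (TB b y) (rrOB' W)
          + raw (TA a x) (TB b y) (rrOA' (rrOB' W)) := by
      intro b; have := hdec a b x y; linarith
    rw [Finset.sum_congr rfl fun b _ => h1 b]
    simp only [Finset.sum_add_distrib, Finset.sum_sub_distrib]
    rw [hSbvw a x y, hSbp a x y]
    ring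
  -- nonnegativity
  have hUnn : ∀ a b x y : Fin 2, 0 ≤ raw (TA a x) (TB b y) (rrOA' W) :=
    fun a b x y => raw_nonneg _ _ _ (hTA1 a x) (hTB1 b y) (rrOA'_nonneg W hW1)
  have hVnn : ∀ a b x y : Fin 2, 0 ≤ raw (TA a x) (TB b y) (rrOB' W) :=
    fun a b x y => raw_nonneg _ _ _ (hTA1 a x) (hTB1 b y) (rrOB'_nonneg W hW1)
  -- value of p on winning points
  have hpval : ∀ x y : Fin 2, raw (TA y x) (TB x y) W = 1 := by
    intro x y; rw [hp]; simp
  -- key inequality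
  have hkey : ∀ x y : Fin 2, raw (TA y x) (TB x y) (rrOA' (rrOB' W))
      ≤ (∑ a, raw (TA a x) (TB x y) (rrOA' W))
        + (∑ b, raw (TA y x) (TB b y) (rrOB' W)) - 1 := by
    intro x y
    have hdxy := hdec y x x y
    have hu_le : raw (TA y x) (TB x y) (rrOA' W) ≤ ∑ a, raw (TA a x) (TB x y) (rrOA' W) :=
      Finset.single_le_sum (f := fun a => raw (TA a x) (TB x y) (rrOA' W))
        (fun a _ => hUnn a x x y) (Finset.mem_univ y)
    have hv_le : raw (TA y x) (TB x y) (rrOB' W) ≤ ∑ b, raw (TA y x) (TB b y) (rrOB' W) :=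
      Finset.single_le_sum (f := fun b => raw (TA y x) (TB b y) (rrOB' W))
        (fun b _ => hVnn y b x y) (Finset.mem_univ x)
    have := hpval x y
    linarith
  -- marginal sums equal 1
  have hsum_u : ∀ y : Fin 2,
      (∑ a, raw (TA a 0) (TB 0 y) (rrOA' W)) + (∑ a, raw (TA a 1) (TB 1 y) (rrOA' W)) = 1 := by
    intro y
    have e1 : (∑ a, raw (TA a 1) (TB 1 y) (rrOA' W)) = ∑ a, raw (TA a 0) (TB 1 y) (rrOA' W) :=
      hSau_indep 1 1 0 y
    rw [e1, ← Finset.sum_add_distrib]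
    have e2 : ∀ a : Fin 2,
        raw (TA a 0) (TB 0 y) (rrOA' W) + raw (TA a 0) (TB 1 y) (rrOA' W)
          = ∑ b, raw (TA a 0) (TB b y) (rrOA' W) := by
      intro a; rw [Fin.sum_univ_two]
    rw [Finset.sum_congr rfl fun a _ => e2 a]
    rw [Finset.sum_congr rfl fun a _ => hSbu a 0 y]
    fin_cases y <;> simp [Fin.sum_univ_two]
  have hsum_v : ∀ x : Fin 2,
      (∑ b, raw (TA 0 x) (TB b 0) (rrOB' W)) + (∑ b, raw (TA 1 x) (TB b 1) (rrOB' W)) = 1 := by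
    intro x
    have e1 : (∑ b, raw (TA 1 x) (TB b 1) (rrOB' W)) = ∑ b, raw (TA 1 x) (TB b 0) (rrOB' W) :=
      hSbv_indep 1 x 1 0
    rw [e1, ← Finset.sum_add_distrib]
    have e2 : ∀ b : Fin 2,
        raw (TA 0 x) (TB b 0) (rrOB' W) + raw (TA 1 x) (TB b 0) (rrOB' W)
          = ∑ a, raw (TA a x) (TB b 0) (rrOB' W) := by
      intro b; rw [Fin.sum_univ_two]
    rw [Finset.sum_congr rfl fun b _ => e2 b]
    rw [Finset.sum_congr rfl fun b _ => hSav b x 0]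
    fin_cases x <;> simp [Fin.sum_univ_two]
  -- positivity of the doubly-reduced correlations at winning points
  have hcpos : (0:ℝ) < (Fintype.card (Fin (n6+1)) : ℝ) * (Fintype.card (Fin (n8+1)) : ℝ) := by
    positivity
  have hwpos : ∀ x y : Fin 2, (0:ℝ) < raw (TA y x) (TB x y) (rrOA' (rrOB' W)) := by
    intro x y
    have hb := raw_bound (TA y x) (TB x y) W (hTA1 y x) (hTB1 x y) hW1
    rw [hpval x y] at hb
    nlinarith
  -- contradiction
  have k00 := hkey 0 0
  have k01 := hkey 0 1
  have k10 := hkey 1 0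
  have k11 := hkey 1 1
  have hu0 := hsum_u 0
  have hu1 := hsum_u 1
  have hv0 := hsum_v 0
  have hv1 := hsum_v 1
  have w00 := hwpos 0 0
  have w01 := hwpos 0 1
  have w10 := hwpos 1 0
  have w11 := hwpos 1 1
  linarith

end Boxworld

end
end

section
/- For every choice of finite nonempty sets A, B, X, Y and every conditional probability distribution P(a, b | x, y) (nonnegative, normalized) such that Σ_b P(a, b | x, y) is independent of y (P is one-way nonsignaling, causally ordered from Alice to Bob), there exist finite nonempty wire index sets, sets of probabilistic local operations T^{A|X} on Alice's wires and T^{B|Y} on Bob's wires, and a boxworld process W satisfying W = _{O'_B}W (causally ordered from Alice to Bob), such that (T^{A|X} ⊗ T^{B|Y}) * W = P. The analogous statement holds with the roles of Alice and Bob interchanged. -/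
open Finset
open scoped Classical

noncomputable section

namespace Boxworld

lemma construct {A B X Y : Type} [Fintype A] [Nonempty A] [Fintype B] [Nonempty B]
    [Fintype X] [Nonempty X] [Fintype Y] [Nonempty Y]
    (P : A → B → X → Y → ℝ)
    (h0 : ∀ a b x y, 0 ≤ P a b x y)
    (h1 : ∀ x y, ∑ a, ∑ b, P a b x y = 1)
    (h2 : ∀ a x y y', ∑ b, P a b x y = ∑ b, P a b x y') :
    ∃ (n1 n2 n3 n4 n5 n6 n7 n8 : ℕ)
      (W : WTen (Fin (n1+1)) (Fin (n2+1)) (Fin (n3+1)) (Fin (n4+1)) (Fin (n5+1)) (Fin (n6+1)) (Fin (n7+1)) (Fin (n8+1)))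
      (TA : A → X → OpTen (Fin (n1+1)) (Fin (n2+1)) (Fin (n5+1)) (Fin (n6+1)))
      (TB : B → Y → OpTen (Fin (n3+1)) (Fin (n4+1)) (Fin (n7+1)) (Fin (n8+1))),
      IsBoxworldProcess W ∧ W = rrOB' W ∧ IsLocalOps TA ∧ IsLocalOps TB ∧
      ∀ a b x y, corr TA TB W a b x y = P a b x y := by
  classical
  obtain ⟨y0⟩ := (inferInstance : Nonempty Y)
  have hNpos : 0 < Fintype.card (X × A) := Fintype.card_pos
  have hN : Fintype.card (X × A) - 1 + 1 = Fintype.card (X × A) :=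
    Nat.succ_pred_eq_of_pos hNpos
  set N : ℕ := Fintype.card (X × A) - 1 with hNdef
  let e : X × A ≃ Fin (N + 1) := (Fintype.equivFin (X × A)).trans (finCongr hN.symm)
  set pA : A → X → ℝ := fun a x => ∑ b, P a b x y0 with hpA
  have hpAy : ∀ a x y, ∑ b, P a b x y = pA a x := fun a x y => h2 a x y y0
  have hpA0 : ∀ a x, 0 ≤ pA a x := fun a x =>
    Finset.sum_nonneg fun b _ => h0 a b x y0
  have hpAsum : ∀ x, ∑ a, pA a x = 1 := fun x => h1 x y0
  have hcb : (Fintype.card B : ℝ) ≠ 0 := Nat.cast_ne_zero.2 Fintype.card_ne_zero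
  set W : WTen (Fin (0+1)) (Fin (0+1)) (Fin (N+1)) (Fin (0+1)) (Fin (0+1)) (Fin (N+1)) (Fin (0+1)) (Fin (0+1)) :=
    (fun _ _ ib' _ _ oa' _ _ => if ib' = oa' then 1 else 0) with hW
  set TA : A → X → OpTen (Fin (0+1)) (Fin (0+1)) (Fin (0+1)) (Fin (N+1)) :=
    (fun a x _ _ _ o' => if o' = e (x, a) then pA a x else 0) with hTA
  set TB : B → Y → OpTen (Fin (N+1)) (Fin (0+1)) (Fin (0+1)) (Fin (0+1)) :=
    (fun b y i' _ _ _ => if pA (e.symm i').2 (e.symm i').1 = 0 then ((Fintype.card B : ℝ))⁻¹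
      else P (e.symm i').2 b (e.symm i').1 y / pA (e.symm i').2 (e.symm i').1) with hTB
  have hOB' : rrOB' W = W := by
    funext ia' oa ib' ob ia oa' ib ob'
    simp [rrOB', hW]
  have hTBsum : ∀ (y : Y) (i' : Fin (N+1)) (o : Fin (0+1)) (i : Fin (0+1)) (o' : Fin (0+1)),
      ∑ b, TB b y i' o i o' = 1 := by
    intro y i' o i o'
    by_cases h : pA (e.symm i').2 (e.symm i').1 = 0
    · simp [hTB, h, Finset.card_univ, nsmul_eq_mul, mul_inv_cancel₀ hcb]
    · rw [hTB]
      simp only [h, if_false]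
      rw [← Finset.sum_div, hpAy, div_self h]
  refine ⟨0, 0, N, 0, 0, N, 0, 0, W, TA, TB, ?_, hOB'.symm, ⟨?_, ?_⟩, ⟨?_, ?_⟩, ?_⟩
  -- IsBoxworldProcess
  · refine ⟨?_, ?_, ?_, ?_, ?_, ?_, ?_⟩
    · intro ia' oa ib' ob ia oa' ib ob'
      rw [hW]
      dsimp only
      split_ifs <;> norm_num
    · simp [tot, hW]
    · funext ia' oa ib' ob ia oa' ib ob'
      simp [rrA, rrIA', rrIA, rrOA, rrOA', rrOB', hW]
    · funext ia' oa ib' ob ia oa' ib ob'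
      simp [rrB, rrIB', rrIB, rrOB, rrOB', rrOA', hW]
      have hne : ((N : ℝ) + 1) ≠ 0 := by positivity
      field_simp
    · rw [hOB']
      rw [add_sub_cancel_left]
    · funext ia' oa ib' ob ia oa' ib ob'
      simp [rrOA, rrIA, hW]
    · funext ia' oa ib' ob ia oa' ib ob'
      simp [rrOB, rrIB, hW]
  -- TA nonneg
  · intro a x i' o i o'
    rw [hTA]
    dsimp only
    split_ifs
    · exact hpA0 a x
    · norm_num
  -- TA det
  · intro x
    refine ⟨?_, ?_, ?_⟩
    · simp only [totOp, hTA]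
      simp
      rw [Finset.sum_comm]
      simp [hpAsum]
    · funext i' o i o'
      simp [rrOpI, rrOpI', rrOpO, rrOpO', hTA]
    · funext i' o i o'
      simp [rrOpO, rrOpO', hTA]
  -- TB nonneg
  · intro b y i' o i o'
    rw [hTB]
    dsimp only
    split_ifs with h
    · positivity
    · exact div_nonneg (h0 _ _ _ _) (hpA0 _ _)
  -- TB det
  · intro y
    have hTx : (fun i' o i o' => ∑ b, TB b y i' o i o') =
        (fun _ _ _ _ => (1:ℝ) : OpTen (Fin (N+1)) (Fin (0+1)) (Fin (0+1)) (Fin (0+1))) := by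
      funext i' o i o'; exact hTBsum y i' o i o'
    rw [hTx]
    have hne : ((N : ℝ) + 1) ≠ 0 := by positivity
    refine ⟨?_, ?_, ?_⟩
    · simp [totOp]
    · funext i' o i o'
      simp [rrOpI, rrOpI', rrOpO, rrOpO']
      field_simp
    · funext i' o i o'
      simp [rrOpO, rrOpO']
  -- corr
  · intro a b x y
    simp only [corr, hW, hTA, hTB]
    simp [mul_ite, ite_mul, mul_one, mul_zero, zero_mul, Finset.sum_ite_eq, Finset.sum_ite_eq',
      Equiv.symm_apply_apply]
    have hstep : ∀ x_1 : Fin (N + 1),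
        (if pA (e.symm x_1).2 (e.symm x_1).1 = 0 then
            (if x_1 = e (x, a) then pA a x * ((Fintype.card B : ℝ))⁻¹ else 0)
          else
            (if x_1 = e (x, a) then
              pA a x * (P (e.symm x_1).2 b (e.symm x_1).1 y / pA (e.symm x_1).2 (e.symm x_1).1)
            else 0)) =
          (if x_1 = e (x, a) then
            pA a x * (if pA a x = 0 then ((Fintype.card B : ℝ))⁻¹ else P a b x y / pA a x)
          else 0) := by
      intro x_1
      by_cases hx : x_1 = e (x, a)
      · subst hx
        simp [mul_ite]
      · simp [hx]
    rw [Finset.sum_congr rfl fun x_1 _ => hstep x_1]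
    rw [Finset.sum_ite_eq' Finset.univ (e (x, a))]
    simp only [Finset.mem_univ, if_true]
    by_cases h : pA a x = 0
    · have hz : ∑ b', P a b' x y = 0 := by rw [hpAy a x y, h]
      have hP : P a b x y = 0 :=
        (Finset.sum_eq_zero_iff_of_nonneg (fun b' _ => h0 a b' x y)).1 hz b (Finset.mem_univ b)
      simp [h, hP]
    · simp only [h, if_false]
      rw [mul_comm, div_mul_cancel₀ _ h]

lemma construct2 {A B X Y : Type} [Fintype A] [Nonempty A] [Fintype B] [Nonempty B]
    [Fintype X] [Nonempty X] [Fintype Y] [Nonempty Y]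
    (P : A → B → X → Y → ℝ)
    (h0 : ∀ a b x y, 0 ≤ P a b x y)
    (h1 : ∀ x y, ∑ a, ∑ b, P a b x y = 1)
    (h2 : ∀ b x x' y, ∑ a, P a b x y = ∑ a, P a b x' y) :
    ∃ (n1 n2 n3 n4 n5 n6 n7 n8 : ℕ)
      (W : WTen (Fin (n1+1)) (Fin (n2+1)) (Fin (n3+1)) (Fin (n4+1)) (Fin (n5+1)) (Fin (n6+1)) (Fin (n7+1)) (Fin (n8+1)))
      (TA : A → X → OpTen (Fin (n1+1)) (Fin (n2+1)) (Fin (n5+1)) (Fin (n6+1)))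
      (TB : B → Y → OpTen (Fin (n3+1)) (Fin (n4+1)) (Fin (n7+1)) (Fin (n8+1))),
      IsBoxworldProcess W ∧ W = rrOA' W ∧ IsLocalOps TA ∧ IsLocalOps TB ∧
      ∀ a b x y, corr TA TB W a b x y = P a b x y := by
  classical
  obtain ⟨x0⟩ := (inferInstance : Nonempty X)
  have hNpos : 0 < Fintype.card (Y × B) := Fintype.card_pos
  have hN : Fintype.card (Y × B) - 1 + 1 = Fintype.card (Y × B) :=
    Nat.succ_pred_eq_of_pos hNpos
  set N : ℕ := Fintype.card (Y × B) - 1 with hNdef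
  let e : Y × B ≃ Fin (N + 1) := (Fintype.equivFin (Y × B)).trans (finCongr hN.symm)
  set pB : B → Y → ℝ := fun b y => ∑ a, P a b x0 y with hpB
  have hpBx : ∀ b x y, ∑ a, P a b x y = pB b y := fun b x y => h2 b x x0 y
  have hpB0 : ∀ b y, 0 ≤ pB b y := fun b y =>
    Finset.sum_nonneg fun a _ => h0 a b x0 y
  have hpBsum : ∀ y, ∑ b, pB b y = 1 := by
    intro y
    rw [← h1 x0 y, Finset.sum_comm]
  have hca : (Fintype.card A : ℝ) ≠ 0 := Nat.cast_ne_zero.2 Fintype.card_ne_zero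
  set W : WTen (Fin (N+1)) (Fin (0+1)) (Fin (0+1)) (Fin (0+1)) (Fin (0+1)) (Fin (0+1)) (Fin (0+1)) (Fin (N+1)) :=
    (fun ia' _ _ _ _ _ _ ob' => if ia' = ob' then 1 else 0) with hW
  set TB : B → Y → OpTen (Fin (0+1)) (Fin (0+1)) (Fin (0+1)) (Fin (N+1)) :=
    (fun b y _ _ _ o' => if o' = e (y, b) then pB b y else 0) with hTB
  set TA : A → X → OpTen (Fin (N+1)) (Fin (0+1)) (Fin (0+1)) (Fin (0+1)) :=
    (fun a x i' _ _ _ => if pB (e.symm i').2 (e.symm i').1 = 0 then ((Fintype.card A : ℝ))⁻¹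
      else P a (e.symm i').2 x (e.symm i').1 / pB (e.symm i').2 (e.symm i').1) with hTA
  have hid : ∀ V : WTen (Fin (N+1)) (Fin (0+1)) (Fin (0+1)) (Fin (0+1)) (Fin (0+1)) (Fin (0+1)) (Fin (0+1)) (Fin (N+1)),
      rrOA' V = V := by
    intro V
    funext ia' oa ib' ob ia oa' ib ob'
    simp [rrOA']
    have h01 : oa' = 0 := Fin.ext (by have := oa'.isLt; omega)
    rw [h01]
  have hTAsum : ∀ (x : X) (i' : Fin (N+1)) (o : Fin (0+1)) (i : Fin (0+1)) (o' : Fin (0+1)),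
      ∑ a, TA a x i' o i o' = 1 := by
    intro x i' o i o'
    by_cases h : pB (e.symm i').2 (e.symm i').1 = 0
    · simp [hTA, h, Finset.card_univ, nsmul_eq_mul, mul_inv_cancel₀ hca]
    · rw [hTA]
      simp only [h, if_false]
      rw [← Finset.sum_div, hpBx, div_self h]
  refine ⟨N, 0, 0, 0, 0, 0, 0, N, W, TA, TB, ?_, (hid W).symm, ⟨?_, ?_⟩, ⟨?_, ?_⟩, ?_⟩
  -- IsBoxworldProcess
  · refine ⟨?_, ?_, ?_, ?_, ?_, ?_, ?_⟩
    · intro ia' oa ib' ob ia oa' ib ob'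
      rw [hW]
      dsimp only
      split_ifs <;> norm_num
    · simp [tot, hW]
    · funext ia' oa ib' ob ia oa' ib ob'
      simp [rrA, rrIA', rrIA, rrOA, rrOA', rrOB', hW]
      have hne : ((N : ℝ) + 1) ≠ 0 := by positivity
      field_simp
    · funext ia' oa ib' ob ia oa' ib ob'
      simp [rrB, rrIB', rrIB, rrOB, rrOB', rrOA', hW]
    · rw [hid W, hid (rrOB' W)]
      rw [add_sub_cancel_right]
    · funext ia' oa ib' ob ia oa' ib ob'
      simp [rrOA, rrIA, hW]
    · funext ia' oa ib' ob ia oa' ib ob'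
      simp [rrOB, rrIB, hW]
  -- TA nonneg
  · intro a x i' o i o'
    rw [hTA]
    dsimp only
    split_ifs with h
    · positivity
    · exact div_nonneg (h0 _ _ _ _) (hpB0 _ _)
  -- TA det
  · intro x
    have hTx : (fun i' o i o' => ∑ a, TA a x i' o i o') =
        (fun _ _ _ _ => (1:ℝ) : OpTen (Fin (N+1)) (Fin (0+1)) (Fin (0+1)) (Fin (0+1))) := by
      funext i' o i o'; exact hTAsum x i' o i o'
    rw [hTx]
    have hne : ((N : ℝ) + 1) ≠ 0 := by positivity
    refine ⟨?_, ?_, ?_⟩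
    · simp [totOp]
    · funext i' o i o'
      simp [rrOpI, rrOpI', rrOpO, rrOpO']
      field_simp
    · funext i' o i o'
      simp [rrOpO, rrOpO']
  -- TB nonneg
  · intro b y i' o i o'
    rw [hTB]
    dsimp only
    split_ifs
    · exact hpB0 b y
    · norm_num
  -- TB det
  · intro y
    refine ⟨?_, ?_, ?_⟩
    · simp only [totOp, hTB]
      simp
      rw [Finset.sum_comm]
      simp [hpBsum]
    · funext i' o i o'
      simp [rrOpI, rrOpI', rrOpO, rrOpO', hTB]
    · funext i' o i o'
      simp [rrOpO, rrOpO', hTB]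
  -- corr
  · intro a b x y
    simp only [corr, hW, hTA, hTB]
    simp [mul_ite, ite_mul, mul_one, mul_zero, zero_mul, Finset.sum_ite_eq, Finset.sum_ite_eq',
      Equiv.symm_apply_apply]
    by_cases h : pB b y = 0
    · have hz : ∑ a', P a' b x y = 0 := by rw [hpBx b x y, h]
      have hP : P a b x y = 0 :=
        (Finset.sum_eq_zero_iff_of_nonneg (fun a' _ => h0 a' b x y)).1 hz a (Finset.mem_univ a)
      simp [h, hP]
    · simp only [h, if_false]
      rw [div_mul_cancel₀ _ h]

theorem statement_14
    (A B X Y : Type) [Fintype A] [Nonempty A] [Fintype B] [Nonempty B]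
    [Fintype X] [Nonempty X] [Fintype Y] [Nonempty Y] :
    (∀ P : A → B → X → Y → ℝ,
      (∀ a b x y, 0 ≤ P a b x y) →
      (∀ x y, ∑ a, ∑ b, P a b x y = 1) →
      (∀ a x y y', ∑ b, P a b x y = ∑ b, P a b x y') →
      ∃ (n1 n2 n3 n4 n5 n6 n7 n8 : ℕ)
        (W : WTen (Fin (n1+1)) (Fin (n2+1)) (Fin (n3+1)) (Fin (n4+1)) (Fin (n5+1)) (Fin (n6+1)) (Fin (n7+1)) (Fin (n8+1)))
        (TA : A → X → OpTen (Fin (n1+1)) (Fin (n2+1)) (Fin (n5+1)) (Fin (n6+1)))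
        (TB : B → Y → OpTen (Fin (n3+1)) (Fin (n4+1)) (Fin (n7+1)) (Fin (n8+1))),
        IsBoxworldProcess W ∧ W = rrOB' W ∧ IsLocalOps TA ∧ IsLocalOps TB ∧
        ∀ a b x y, corr TA TB W a b x y = P a b x y) ∧
    (∀ P : A → B → X → Y → ℝ,
      (∀ a b x y, 0 ≤ P a b x y) →
      (∀ x y, ∑ a, ∑ b, P a b x y = 1) →
      (∀ b x x' y, ∑ a, P a b x y = ∑ a, P a b x' y) →
      ∃ (n1 n2 n3 n4 n5 n6 n7 n8 : ℕ)
        (W : WTen (Fin (n1+1)) (Fin (n2+1)) (Fin (n3+1)) (Fin (n4+1)) (Fin (n5+1)) (Fin (n6+1)) (Fin (n7+1)) (Fin (n8+1)))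
        (TA : A → X → OpTen (Fin (n1+1)) (Fin (n2+1)) (Fin (n5+1)) (Fin (n6+1)))
        (TB : B → Y → OpTen (Fin (n3+1)) (Fin (n4+1)) (Fin (n7+1)) (Fin (n8+1))),
        IsBoxworldProcess W ∧ W = rrOA' W ∧ IsLocalOps TA ∧ IsLocalOps TB ∧
        ∀ a b x y, corr TA TB W a b x y = P a b x y) := by
  exact ⟨fun P h0 h1 h2 => construct P h0 h1 h2,
    fun P h0 h1 h2 => construct2 P h0 h1 h2⟩

end Boxworld

end
end

section
/- For every choice of finite nonempty sets A, B, X, Y and every nonsignaling conditional probability distribution P(a, b | x, y) (nonnegative, normalized, with Σ_b P(a, b | x, y) independent of y and Σ_a P(a, b | x, y) independent of x), there exist finite nonempty wire index sets, sets of probabilistic local operations T^{A|X} on Alice's wires and T^{B|Y} on Bob's wires, and a nonsignaling boxworld process W (a boxworld process satisfying W = _{O'_AO'_B}W), such that (T^{A|X} ⊗ T^{B|Y}) * W = P. -/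
open Finset
open scoped Classical

noncomputable section

namespace Boxworld

section AuxProof

private lemma sum_swap4 {α β γ δ : Type*} [Fintype α] [Fintype β] [Fintype γ] [Fintype δ]
    (f : α → β → γ → δ → ℝ) :
    ∑ a, ∑ b, ∑ c, ∑ d, f a b c d = ∑ c, ∑ d, ∑ a, ∑ b, f a b c d := by
  calc ∑ a, ∑ b, ∑ c, ∑ d, f a b c d
      = ∑ a, ∑ c, ∑ b, ∑ d, f a b c d :=
        Finset.sum_congr rfl fun a _ => Finset.sum_comm
    _ = ∑ c, ∑ a, ∑ b, ∑ d, f a b c d := Finset.sum_comm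
    _ = ∑ c, ∑ d, ∑ a, ∑ b, f a b c d := by
        refine Finset.sum_congr rfl fun c _ => ?_
        calc ∑ a, ∑ b, ∑ d, f a b c d
            = ∑ a, ∑ d, ∑ b, f a b c d :=
              Finset.sum_congr rfl fun a _ => Finset.sum_comm
          _ = ∑ d, ∑ a, ∑ b, f a b c d := Finset.sum_comm

private lemma rrOA'_eq_self {IA' OA IB' OB IA IB OB' : Type}
    [Fintype IA'] [Fintype OA] [Fintype IB'] [Fintype OB]
    [Fintype IA] [Fintype IB] [Fintype OB']
    (W : WTen IA' OA IB' OB IA (Fin 1) IB OB') : rrOA' W = W := by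
  funext ia' oa ib' ob ia oa' ib ob'
  rw [Subsingleton.elim oa' (0 : Fin 1)]
  simp [rrOA']

private lemma rrOB'_eq_self {IA' OA IB' OB IA OA' IB : Type}
    [Fintype IA'] [Fintype OA] [Fintype IB'] [Fintype OB]
    [Fintype IA] [Fintype OA'] [Fintype IB]
    (W : WTen IA' OA IB' OB IA OA' IB (Fin 1)) : rrOB' W = W := by
  funext ia' oa ib' ob ia oa' ib ob'
  rw [Subsingleton.elim ob' (0 : Fin 1)]
  simp [rrOB']

private lemma sum_fin_one (f : Fin (0 + 1) → ℝ) : ∑ i, f i = f 0 :=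
  Fin.sum_univ_one f

private lemma quad_delta {α β γ δ : Type} [Fintype α] [Fintype β] [Fintype γ] [Fintype δ]
    [DecidableEq α] [DecidableEq β] [DecidableEq γ] [DecidableEq δ]
    (a : α) (b : β) (c : γ) (d : δ) (f : α → β → γ → δ → ℝ) :
    (∑ i, ∑ j, ∑ k, ∑ l,
      ((if i = a then (1:ℝ) else 0) * (if k = c then (1:ℝ) else 0)) *
      ((if j = b then (1:ℝ) else 0) * (if l = d then (1:ℝ) else 0)) * f i j k l)
      = f a b c d := by
  rw [Finset.sum_eq_single a]
  rotate_left
  · intro i _ hi; simp [hi]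
  · intro h; exact absurd (Finset.mem_univ a) h
  rw [Finset.sum_eq_single b]
  rotate_left
  · intro j _ hj; simp [hj]
  · intro h; exact absurd (Finset.mem_univ b) h
  rw [Finset.sum_eq_single c]
  rotate_left
  · intro k _ hk; simp [hk]
  · intro h; exact absurd (Finset.mem_univ c) h
  rw [Finset.sum_eq_single d]
  rotate_left
  · intro l _ hl; simp [hl]
  · intro h; exact absurd (Finset.mem_univ d) h
  simp

end AuxProof

set_option maxHeartbeats 4000000 in
theorem statement_15
    (A B X Y : Type) [Fintype A] [Nonempty A] [Fintype B] [Nonempty B]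
    [Fintype X] [Nonempty X] [Fintype Y] [Nonempty Y]
    (P : A → B → X → Y → ℝ)
    (hpos : ∀ a b x y, 0 ≤ P a b x y)
    (hnorm : ∀ x y, ∑ a, ∑ b, P a b x y = 1)
    (hnsAB : ∀ a x y y', ∑ b, P a b x y = ∑ b, P a b x y')
    (hnsBA : ∀ b x x' y, ∑ a, P a b x y = ∑ a, P a b x' y) :
    ∃ (n1 n2 n3 n4 n5 n6 n7 n8 : ℕ)
      (W : WTen (Fin (n1+1)) (Fin (n2+1)) (Fin (n3+1)) (Fin (n4+1)) (Fin (n5+1)) (Fin (n6+1)) (Fin (n7+1)) (Fin (n8+1)))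
      (TA : A → X → OpTen (Fin (n1+1)) (Fin (n2+1)) (Fin (n5+1)) (Fin (n6+1)))
      (TB : B → Y → OpTen (Fin (n3+1)) (Fin (n4+1)) (Fin (n7+1)) (Fin (n8+1))),
      IsBoxworldProcess W ∧ W = rrOA' (rrOB' W) ∧
      IsLocalOps TA ∧ IsLocalOps TB ∧
      ∀ a b x y, corr TA TB W a b x y = P a b x y := by
  classical
  obtain ⟨nA, hA⟩ : ∃ n, Fintype.card A = n + 1 :=
    ⟨Fintype.card A - 1, (Nat.succ_pred_eq_of_pos Fintype.card_pos).symm⟩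
  obtain ⟨nB, hB⟩ : ∃ n, Fintype.card B = n + 1 :=
    ⟨Fintype.card B - 1, (Nat.succ_pred_eq_of_pos Fintype.card_pos).symm⟩
  obtain ⟨nX, hX⟩ : ∃ n, Fintype.card X = n + 1 :=
    ⟨Fintype.card X - 1, (Nat.succ_pred_eq_of_pos Fintype.card_pos).symm⟩
  obtain ⟨nY, hY⟩ : ∃ n, Fintype.card Y = n + 1 :=
    ⟨Fintype.card Y - 1, (Nat.succ_pred_eq_of_pos Fintype.card_pos).symm⟩
  let eA : A ≃ Fin (nA + 1) := Fintype.equivFinOfCardEq hA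
  let eB : B ≃ Fin (nB + 1) := Fintype.equivFinOfCardEq hB
  let eX : X ≃ Fin (nX + 1) := Fintype.equivFinOfCardEq hX
  let eY : Y ≃ Fin (nY + 1) := Fintype.equivFinOfCardEq hY
  have hsumA : ∀ oa : Fin (nA + 1), (∑ a, if oa = eA a then (1:ℝ) else 0) = 1 := by
    intro oa
    rw [Fintype.sum_eq_single (eA.symm oa)]
    · simp
    · intro b hb
      have : oa ≠ eA b := fun h => hb (by rw [h, Equiv.symm_apply_apply])
      simp [this]
  have hsumB : ∀ ob : Fin (nB + 1), (∑ b, if ob = eB b then (1:ℝ) else 0) = 1 := by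
    intro ob
    rw [Fintype.sum_eq_single (eB.symm ob)]
    · simp
    · intro b hb
      have : ob ≠ eB b := fun h => hb (by rw [h, Equiv.symm_apply_apply])
      simp [this]
  refine ⟨0, nA, 0, nB, nX, 0, nY, 0,
    fun _ oa _ ob ia _ ib _ => P (eA.symm oa) (eB.symm ob) (eX.symm ia) (eY.symm ib),
    fun a x _ oa ia _ => (if oa = eA a then (1:ℝ) else 0) * (if ia = eX x then (1:ℝ) else 0),
    fun b y _ ob ib _ => (if ob = eB b then (1:ℝ) else 0) * (if ib = eY y then (1:ℝ) else 0),
    ?_, ?_, ?_, ?_, ?_⟩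
  · refine ⟨?_, ?_, ?_, ?_, ?_, ?_, ?_⟩
    · exact fun _ _ _ _ _ _ _ _ => hpos _ _ _ _
    · simp only [tot, sum_fin_one]
      rw [sum_swap4]
      have h1 : ∀ (ia : Fin (nX+1)) (ib : Fin (nY+1)),
          (∑ oa : Fin (nA+1), ∑ ob : Fin (nB+1),
            P (eA.symm oa) (eB.symm ob) (eX.symm ia) (eY.symm ib)) = 1 := by
        intro ia ib
        calc (∑ oa : Fin (nA+1), ∑ ob : Fin (nB+1),
                P (eA.symm oa) (eB.symm ob) (eX.symm ia) (eY.symm ib))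
            = ∑ a, ∑ ob : Fin (nB+1), P a (eB.symm ob) (eX.symm ia) (eY.symm ib) :=
              Equiv.sum_comp eA.symm
                (fun a => ∑ ob : Fin (nB+1), P a (eB.symm ob) (eX.symm ia) (eY.symm ib))
          _ = ∑ a, ∑ b, P a b (eX.symm ia) (eY.symm ib) :=
              Finset.sum_congr rfl fun a _ =>
                Equiv.sum_comp eB.symm (fun b => P a b (eX.symm ia) (eY.symm ib))
          _ = 1 := hnorm _ _
      simp [h1, Finset.sum_const, Finset.card_univ]
      ring
    · exact (rrOB'_eq_self _).symm
    · exact (rrOA'_eq_self _).symm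
    · rw [rrOB'_eq_self, rrOA'_eq_self]
      abel
    · have hconst : ∀ (ob : Fin (nB+1)) (ib : Fin (nY+1)) (i i' : Fin (nX+1)),
          (∑ oa : Fin (nA+1), P (eA.symm oa) (eB.symm ob) (eX.symm i) (eY.symm ib)) =
          (∑ oa : Fin (nA+1), P (eA.symm oa) (eB.symm ob) (eX.symm i') (eY.symm ib)) := by
        intro ob ib i i'
        rw [Equiv.sum_comp eA.symm (fun a => P a (eB.symm ob) (eX.symm i) (eY.symm ib)),
          Equiv.sum_comp eA.symm (fun a => P a (eB.symm ob) (eX.symm i') (eY.symm ib))]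
        exact hnsBA _ _ _ _
      funext ia' oa ib' ob ia oa' ib ob'
      simp only [rrOA, rrIA]
      have : ∀ j : Fin (nX+1),
          (∑ oa : Fin (nA+1), P (eA.symm oa) (eB.symm ob) (eX.symm j) (eY.symm ib)) =
          (∑ oa : Fin (nA+1), P (eA.symm oa) (eB.symm ob) (eX.symm ia) (eY.symm ib)) :=
        fun j => hconst ob ib j ia
      simp only [this]
      rw [Finset.sum_const, Finset.card_univ]
      have hc : ((Fintype.card (Fin (nX+1)) : ℝ)) ≠ 0 := by
        rw [Fintype.card_fin]; positivity
      rw [nsmul_eq_mul, mul_div_cancel_left₀ _ hc]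
    · have hconst : ∀ (oa : Fin (nA+1)) (ia : Fin (nX+1)) (i i' : Fin (nY+1)),
          (∑ ob : Fin (nB+1), P (eA.symm oa) (eB.symm ob) (eX.symm ia) (eY.symm i)) =
          (∑ ob : Fin (nB+1), P (eA.symm oa) (eB.symm ob) (eX.symm ia) (eY.symm i')) := by
        intro oa ia i i'
        rw [Equiv.sum_comp eB.symm (fun b => P (eA.symm oa) b (eX.symm ia) (eY.symm i)),
          Equiv.sum_comp eB.symm (fun b => P (eA.symm oa) b (eX.symm ia) (eY.symm i'))]
        exact hnsAB _ _ _ _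
      funext ia' oa ib' ob ia oa' ib ob'
      simp only [rrOB, rrIB]
      have : ∀ j : Fin (nY+1),
          (∑ ob : Fin (nB+1), P (eA.symm oa) (eB.symm ob) (eX.symm ia) (eY.symm j)) =
          (∑ ob : Fin (nB+1), P (eA.symm oa) (eB.symm ob) (eX.symm ia) (eY.symm ib)) :=
        fun j => hconst oa ia j ib
      simp only [this]
      rw [Finset.sum_const, Finset.card_univ]
      have hc : ((Fintype.card (Fin (nY+1)) : ℝ)) ≠ 0 := by
        rw [Fintype.card_fin]; positivity
      rw [nsmul_eq_mul, mul_div_cancel_left₀ _ hc]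
  · rw [rrOB'_eq_self, rrOA'_eq_self]
  · constructor
    · intro a x i' o i o'
      dsimp only
      split_ifs <;> norm_num
    · intro x
      have hTx : ∀ (o : Fin (nA+1)) (i : Fin (nX+1)),
          (∑ a, (if o = eA a then (1:ℝ) else 0) * (if i = eX x then (1:ℝ) else 0))
            = (if i = eX x then (1:ℝ) else 0) := by
        intro o i
        rw [← Finset.sum_mul, hsumA o, one_mul]
      refine ⟨?_, ?_, ?_⟩
      · simp only [totOp, sum_fin_one, hTx]
        simp [Finset.sum_ite_eq']
      · funext i' o i o'
        simp only [rrOpI, rrOpI', rrOpO, rrOpO', sum_fin_one, hTx]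
        have h2 : ((nA:ℝ)+1) ≠ 0 := by positivity
        simp only [← Finset.sum_div]
        simp [Finset.sum_ite_eq', Finset.sum_const, Finset.card_univ, div_self h2]
      · funext i' o i o'
        simp only [rrOpO, rrOpO', sum_fin_one, hTx]
        rw [Finset.sum_const, Finset.card_univ]
        have hc : ((Fintype.card (Fin (nA+1)) : ℝ)) ≠ 0 := by
          rw [Fintype.card_fin]; positivity
        rw [nsmul_eq_mul, mul_div_cancel_left₀ _ hc]
  · constructor
    · intro b y i' o i o'
      dsimp only
      split_ifs <;> norm_num
    · intro y
      have hTy : ∀ (o : Fin (nB+1)) (i : Fin (nY+1)),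
          (∑ b, (if o = eB b then (1:ℝ) else 0) * (if i = eY y then (1:ℝ) else 0))
            = (if i = eY y then (1:ℝ) else 0) := by
        intro o i
        rw [← Finset.sum_mul, hsumB o, one_mul]
      refine ⟨?_, ?_, ?_⟩
      · simp only [totOp, sum_fin_one, hTy]
        simp [Finset.sum_ite_eq']
      · funext i' o i o'
        simp only [rrOpI, rrOpI', rrOpO, rrOpO', sum_fin_one, hTy]
        have h2 : ((nB:ℝ)+1) ≠ 0 := by positivity
        simp only [← Finset.sum_div]
        simp [Finset.sum_ite_eq', Finset.sum_const, Finset.card_univ, div_self h2]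
      · funext i' o i o'
        simp only [rrOpO, rrOpO', sum_fin_one, hTy]
        rw [Finset.sum_const, Finset.card_univ]
        have hc : ((Fintype.card (Fin (nB+1)) : ℝ)) ≠ 0 := by
          rw [Fintype.card_fin]; positivity
        rw [nsmul_eq_mul, mul_div_cancel_left₀ _ hc]
  · intro a b x y
    simp only [corr, sum_fin_one]
    rw [quad_delta (eA a) (eB b) (eX x) (eY y)
      (fun i j k l => P (eA.symm i) (eB.symm j) (eX.symm k) (eY.symm l))]
    simp


end Boxworld

end
end
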